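/- arXiv:2005.06309 — 13 statements merged into one kernel-verified Lean document; each statement's English description precedes it below -/
import Mathlib

section
/- Let μ be a Borel probability measure on ℝ and κ > 0. Let T_κ : ℝ → ℝ be the cutoff function T_κ(t) = max(-κ, min(t, κ)). Then there exists a ∈ ℝ such that ∫ T_κ(t - a)² dμ(t) ≤ 8 ∫∫ T_κ(t - s)² dμ(t) dμ(s). -/
/-! By the first moment method some `a` lies below the `μ`-average of
`a ↦ ∫ T_κ(t - a)² dμ(t)`, and that average is the double integral. -/

open MeasureTheory Function

theorem sq_max_neg_min_le_sq (x κ : ℝ) : max (-κ) (min x κ) ^ 2 ≤ κ ^ 2 := by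
  rw [← sq_abs κ]
  exact sq_le_sq' ((neg_le_neg (le_abs_self κ)).trans (le_max_left _ _))
    (max_le (neg_le_abs κ) ((min_le_right x κ).trans (le_abs_self κ)))

theorem exists_integral_le_integral_integral {α β : Type*} [MeasurableSpace α]
    [MeasurableSpace β] {μ : Measure α} [IsProbabilityMeasure μ] {ν : Measure β} [SFinite ν]
    {f : α → β → ℝ} (hf : Integrable (uncurry f) (μ.prod ν)) :
    ∃ a, ∫ t, f a t ∂ν ≤ ∫ s, ∫ t, f s t ∂ν ∂μ :=
  exists_le_integral hf.integral_prod_left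

theorem stmt_0_general (μ : Measure ℝ) [IsProbabilityMeasure μ] (κ : ℝ) :
    ∃ a : ℝ, ∫ t, (max (-κ) (min (t - a) κ)) ^ 2 ∂μ ≤
      8 * ∫ s, ∫ t, (max (-κ) (min (t - s) κ)) ^ 2 ∂μ ∂μ := by
  have hint : Integrable (uncurry fun s t => max (-κ) (min (t - s) κ) ^ 2) (μ.prod μ) := by
    refine .of_bound (by fun_prop : Continuous _).aestronglyMeasurable (κ ^ 2) ?_
    filter_upwards with ⟨s, t⟩
    simpa only [uncurry_apply_pair, Real.norm_of_nonneg (sq_nonneg _)] using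
      sq_max_neg_min_le_sq _ κ
  obtain ⟨a, ha⟩ := exists_integral_le_integral_integral hint
  have hnonneg : 0 ≤ ∫ s, ∫ t, max (-κ) (min (t - s) κ) ^ 2 ∂μ ∂μ :=
    integral_nonneg fun _ => integral_nonneg fun _ => sq_nonneg _
  exact ⟨a, ha.trans (le_mul_of_one_le_left hnonneg (by norm_num))⟩

theorem stmt_0 (μ : Measure ℝ) [IsProbabilityMeasure μ] (κ : ℝ) (hκ : 0 < κ) :
    ∃ a : ℝ, ∫ t, (max (-κ) (min (t - a) κ)) ^ 2 ∂μ ≤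
      8 * ∫ s, ∫ t, (max (-κ) (min (t - s) κ)) ^ 2 ∂μ ∂μ :=
  stmt_0_general μ κ
end

section
/- Let (a_n) and (b_n) be bounded sequences of nonnegative reals such that b_n = o(a_n) as n → ∞ and ∑ a_n = +∞. Then there exists a subset I ⊆ ℕ such that ∑_{i ∈ I} b_i < +∞ and ∑_{i ∈ I} a_i = +∞. -/
/-!
Choose disjoint blocks of consecutive indices, the `k`-th one starting beyond the point
from which `b ≤ 2⁻ᵏ a`, on each of which the sum of `a` lies between `1` and `1 + M` (the
divergence of `∑ a` provides the lower bound, the bound `a ≤ M` on the last term the upper one).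
On the union `I` of the blocks, `∑ a` adds up infinitely many block sums `≥ 1`, while
`∑ b` is dominated by `∑ₖ 2⁻ᵏ (1 + M)`.
-/

open Finset Function

lemma summable_indicator_iUnion_iff_of_nonneg {α ι : Type*} {f : α → ℝ} (hf : ∀ x, 0 ≤ f x)
    {F : ι → Finset α} (hF : Pairwise (Disjoint on F)) :
    Summable ((⋃ k, (F k : Set α)).indicator f) ↔ Summable fun k ↦ ∑ x ∈ F k, f x := by
  have hF' : Pairwise (Disjoint on fun k ↦ (F k : Set α)) :=
    fun k l hkl ↦ Finset.disjoint_coe.2 (hF hkl)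
  rw [← summable_subtype_iff_indicator, ← (Set.unionEqSigmaOfDisjoint hF').symm.summable_iff]
  refine (summable_sigma_of_nonneg fun _ ↦ hf _).trans ?_
  simp only [Summable.of_finite, implies_true, true_and]
  simp only [Set.unionEqSigmaOfDisjoint, Equiv.symm_symm, Equiv.ofBijective_apply,
    Set.sigmaToiUnion, Finset.tsum_subtype']

lemma exists_le_sum_Ico_le_add {a : ℕ → ℝ} (ha : ∀ n, 0 ≤ a n) {M : ℝ} (haM : ∀ n, a n ≤ M)
    (hdiv : ¬ Summable a) {c : ℝ} (hc : 0 < c) (n : ℕ) :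
    ∃ m ≥ n, c ≤ ∑ i ∈ Ico n m, a i ∧ ∑ i ∈ Ico n m, a i ≤ c + M := by
  classical
  have htail : ∃ j, c ≤ ∑ i ∈ range j, a (n + i) := by
    rw [← summable_nat_add_iff n,
      not_summable_iff_tendsto_nat_atTop_of_nonneg fun _ ↦ ha _] at hdiv
    simpa only [add_comm n] using (hdiv.eventually_ge_atTop c).exists
  obtain ⟨j, hj⟩ : ∃ j, Nat.find htail = j + 1 :=
    Nat.exists_eq_add_one_of_ne_zero fun h ↦ by
      have := h ▸ Nat.find_spec htail
      simp only [range_zero, sum_empty] at this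
      linarith
  have hlow : ∑ i ∈ range j, a (n + i) < c := by
    simpa using Nat.find_min htail (hj ▸ j.lt_succ_self)
  refine ⟨n + (j + 1), by omega, ?_⟩
  rw [sum_Ico_eq_sum_range, Nat.add_sub_cancel_left, ← hj]
  refine ⟨Nat.find_spec htail, ?_⟩
  rw [hj, sum_range_succ]
  linarith [haM (n + j)]

lemma exists_disjoint_Ico_blocks {P : ℕ → ℕ → Prop} (hP : ∀ n, ∃ m ≥ n, P n m) (N : ℕ → ℕ) :
    ∃ s e : ℕ → ℕ, (∀ k, N k ≤ s k ∧ P (s k) (e k)) ∧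
      Pairwise (Disjoint on fun k ↦ Ico (s k) (e k)) := by
  choose next hnext_ge hnext using hP
  let s : ℕ → ℕ := fun k ↦ Nat.rec (N 0) (fun k sk ↦ max (N (k + 1)) (next sk)) k
  have hs_succ (k : ℕ) : s (k + 1) = max (N (k + 1)) (next (s k)) := rfl
  have hs_mono : Monotone s := monotone_nat_of_le_succ fun k ↦
    (hnext_ge _).trans (hs_succ k ▸ le_max_right _ _)
  have hend_le (k l : ℕ) (hkl : k < l) : next (s k) ≤ s l :=
    (hs_succ k ▸ le_max_right _ _).trans (hs_mono hkl)
  refine ⟨s, next ∘ s, fun k ↦ ⟨?_, hnext _⟩, ?_⟩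
  · cases k with
    | zero => exact le_rfl
    | succ k => exact hs_succ k ▸ le_max_left _ _
  · exact (pairwise_disjoint_on _).2 fun k l hkl ↦
      (Ico_disjoint_Ico_consecutive _ _ _).mono_right (Ico_subset_Ico_left (hend_le k l hkl))

theorem stmt_1_general (a b : ℕ → ℝ) (ha : ∀ n, 0 ≤ a n) (hb : ∀ n, 0 ≤ b n)
    (M : ℝ) (haM : ∀ n, a n ≤ M)
    (hsmall : ∀ ε > 0, ∃ N : ℕ, ∀ n ≥ N, b n ≤ ε * a n)
    (hdiv : ¬ Summable a) :
    ∃ I : Set ℕ, Summable (I.indicator b) ∧ ¬ Summable (I.indicator a) := by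
  choose N hN using fun k : ℕ ↦ hsmall ((1 / 2) ^ k) (by positivity)
  obtain ⟨s, e, hblock, hdisj⟩ := exists_disjoint_Ico_blocks
    (P := fun n m ↦ 1 ≤ ∑ i ∈ Ico n m, a i ∧ ∑ i ∈ Ico n m, a i ≤ 1 + M)
    (exists_le_sum_Ico_le_add ha haM hdiv one_pos) N
  refine ⟨⋃ k, (Ico (s k) (e k) : Set ℕ),
    (summable_indicator_iUnion_iff_of_nonneg hb hdisj).2 ?_,
    (summable_indicator_iUnion_iff_of_nonneg ha hdisj).not.2 fun hsum ↦ ?_⟩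
  · refine (summable_geometric_two.mul_right (1 + M)).of_nonneg_of_le
      (fun k ↦ sum_nonneg fun i _ ↦ hb i) fun k ↦ ?_
    obtain ⟨hNs, -, hsum_le⟩ := hblock k
    calc ∑ i ∈ Ico (s k) (e k), b i ≤ ∑ i ∈ Ico (s k) (e k), (1 / 2) ^ k * a i :=
          sum_le_sum fun i hi ↦ hN k i (hNs.trans (mem_Ico.1 hi).1)
      _ = (1 / 2) ^ k * ∑ i ∈ Ico (s k) (e k), a i := (mul_sum ..).symm
      _ ≤ (1 / 2) ^ k * (1 + M) := by gcongr
  · obtain ⟨k, hk⟩ := (hsum.tendsto_atTop_zero.eventually (gt_mem_nhds one_pos)).exists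
    linarith [(hblock k).2.1]

theorem stmt_1 (a b : ℕ → ℝ) (ha : ∀ n, 0 ≤ a n) (hb : ∀ n, 0 ≤ b n)
    (M : ℝ) (haM : ∀ n, a n ≤ M) (hbM : ∀ n, b n ≤ M)
    (hsmall : ∀ ε > 0, ∃ N : ℕ, ∀ n ≥ N, b n ≤ ε * a n)
    (hdiv : ¬ Summable a) :
    ∃ I : Set ℕ, Summable (I.indicator b) ∧ ¬ Summable (I.indicator a) :=
  stmt_1_general a b ha hb M haM hsmall hdiv
end

section
/- Let X₀ and X₁ be standard Borel spaces, π : X₀ → X₁ a Borel map, and μ ∼ ν equivalent probability measures on X₀. Then ∫_{X₁} (d(π_*μ)/d(π_*ν)) d(π_*μ) ≤ ∫_{X₀} (dμ/dν) dμ. -/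
/-!
Write `f = dμ/dν` and `g = d(π_*μ)/d(π_*ν)`. For measurable `φ ≤ g` with
`A = ∫ φ d(π_*μ) < ∞`, pulling back along `π` gives `A = ∫ f · (φ ∘ π) dν` and
`∫ (φ ∘ π)² dν = ∫ φ² d(π_*ν) ≤ ∫ g φ d(π_*ν) = A`. Integrating `2 f (φ ∘ π) ≤ f² + (φ ∘ π)²`
then gives `2A ≤ ∫ f² dν + A = ∫ f dμ + A`, so `A ≤ ∫ f dμ`. Truncating `g` at level `n` and
letting `n → ∞` gives the inequality for `g` itself.
-/

open MeasureTheory ENNReal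

lemma ENNReal.two_mul_le_add_sq (a b : ℝ≥0∞) : 2 * a * b ≤ a ^ 2 + b ^ 2 := by
  rcases eq_or_ne a ∞ with rfl | ha
  · simp
  rcases eq_or_ne b ∞ with rfl | hb
  · simp
  lift a to NNReal using ha
  lift b to NNReal using hb
  exact_mod_cast _root_.two_mul_le_add_sq a b

namespace MeasureTheory

variable {X Y : Type*} {mX : MeasurableSpace X} {mY : MeasurableSpace Y}

lemma lintegral_eq_iSup_lintegral_min_natCast (ρ : Measure X) {g : X → ℝ≥0∞}
    (hg : Measurable g) : ∫⁻ x, g x ∂ρ = ⨆ n : ℕ, ∫⁻ x, min (g x) n ∂ρ := by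
  have hsup : ∀ x, ⨆ n : ℕ, min (g x) n = g x := fun x => by
    rw [← inf_iSup_eq, iSup_natCast, inf_top_eq]
  simp_rw [← lintegral_iSup (fun n => hg.min measurable_const)
    (fun m n hmn x => min_le_min_left _ (Nat.cast_le.2 hmn)), hsup]

variable {μ ν : Measure X}

lemma Measure.lintegral_rnDeriv_eq_lintegral_rnDeriv_sq [μ.HaveLebesgueDecomposition ν]
    (hμν : μ ≪ ν) : ∫⁻ x, μ.rnDeriv ν x ∂μ = ∫⁻ x, μ.rnDeriv ν x ^ 2 ∂ν := by
  simp_rw [sq]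
  exact (lintegral_rnDeriv_mul hμν (Measure.measurable_rnDeriv μ ν).aemeasurable).symm

variable {π : X → Y}

lemma lintegral_map_le_lintegral_rnDeriv_of_le_rnDeriv_map [μ.HaveLebesgueDecomposition ν]
    [(μ.map π).HaveLebesgueDecomposition (ν.map π)] (hμν : μ ≪ ν) (hπ : Measurable π)
    {φ : Y → ℝ≥0∞} (hφ : Measurable φ) (hφg : φ ≤ (μ.map π).rnDeriv (ν.map π))
    (hA : ∫⁻ y, φ y ∂(μ.map π) ≠ ∞) :
    ∫⁻ y, φ y ∂(μ.map π) ≤ ∫⁻ x, μ.rnDeriv ν x ∂μ := by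
  set f := μ.rnDeriv ν
  set A := ∫⁻ y, φ y ∂(μ.map π)
  have hA_pullback : A = ∫⁻ x, f x * φ (π x) ∂ν :=
    (lintegral_map hφ hπ).trans (lintegral_rnDeriv_mul hμν (hφ.comp hπ).aemeasurable).symm
  have hsq_le : ∫⁻ x, φ (π x) ^ 2 ∂ν ≤ A := calc
    ∫⁻ x, φ (π x) ^ 2 ∂ν = ∫⁻ y, φ y ^ 2 ∂(ν.map π) := (lintegral_map (hφ.pow_const 2) hπ).symm
    _ ≤ ∫⁻ y, (μ.map π).rnDeriv (ν.map π) y * φ y ∂(ν.map π) :=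
      lintegral_mono fun y => by rw [sq]; exact mul_le_mul_left (hφg y) _
    _ = A := lintegral_rnDeriv_mul (hμν.map hπ) hφ.aemeasurable
  have h2A : 2 * A ≤ ∫⁻ x, f x ∂μ + A := calc
    2 * A = ∫⁻ x, 2 * f x * φ (π x) ∂ν := by
      rw [hA_pullback, ← lintegral_const_mul' _ _ ofNat_ne_top]
      simp_rw [mul_assoc]
    _ ≤ ∫⁻ x, f x ^ 2 + φ (π x) ^ 2 ∂ν :=
      lintegral_mono fun x => ENNReal.two_mul_le_add_sq _ _
    _ = ∫⁻ x, f x ^ 2 ∂ν + ∫⁻ x, φ (π x) ^ 2 ∂ν :=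
      lintegral_add_left ((Measure.measurable_rnDeriv μ ν).pow_const 2) _
    _ ≤ ∫⁻ x, f x ∂μ + A := by
      rw [Measure.lintegral_rnDeriv_eq_lintegral_rnDeriv_sq hμν]
      gcongr
  exact ENNReal.le_of_add_le_add_right hA (by rwa [two_mul] at h2A)

theorem lintegral_rnDeriv_map_le [IsFiniteMeasure μ] [SigmaFinite (ν.map π)] (hμν : μ ≪ ν)
    (hπ : Measurable π) :
    ∫⁻ y, (μ.map π).rnDeriv (ν.map π) y ∂(μ.map π) ≤ ∫⁻ x, μ.rnDeriv ν x ∂μ := by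
  have : SigmaFinite ν := SigmaFinite.of_map _ hπ.aemeasurable ‹_›
  rw [lintegral_eq_iSup_lintegral_min_natCast _ (Measure.measurable_rnDeriv _ _)]
  refine iSup_le fun n => lintegral_map_le_lintegral_rnDeriv_of_le_rnDeriv_map hμν hπ
    ((Measure.measurable_rnDeriv _ _).min measurable_const) (fun y => min_le_left _ _) ?_
  exact ne_top_of_le_ne_top (by simp [ENNReal.mul_eq_top, measure_ne_top])
    (lintegral_mono fun y => min_le_right _ (n : ℝ≥0∞))

end MeasureTheory

theorem stmt_6_general {X₀ X₁ : Type*} [MeasurableSpace X₀] [MeasurableSpace X₁]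
    (π : X₀ → X₁) (hπ : Measurable π) (μ ν : Measure X₀)
    [IsProbabilityMeasure μ] [IsProbabilityMeasure ν] (hμν : μ ≪ ν) :
    ∫⁻ y, (Measure.map π μ).rnDeriv (Measure.map π ν) y ∂(Measure.map π μ) ≤
      ∫⁻ x, μ.rnDeriv ν x ∂μ :=
  lintegral_rnDeriv_map_le hμν hπ

theorem stmt_6 {X₀ X₁ : Type*} [MeasurableSpace X₀] [MeasurableSpace X₁]
    (π : X₀ → X₁) (hπ : Measurable π) (μ ν : Measure X₀)
    [IsProbabilityMeasure μ] [IsProbabilityMeasure ν] (hμν : μ ≪ ν) (hνμ : ν ≪ μ) :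
    ∫⁻ y, (Measure.map π μ).rnDeriv (Measure.map π ν) y ∂(Measure.map π μ) ≤
      ∫⁻ x, μ.rnDeriv ν x ∂μ :=
  stmt_6_general π hπ μ ν hμν
end

section
/- For a ∈ (0,1) let μ_a be the probability measure on {0,1} with μ_a(0) = a and μ_a(1) = 1 - a. Define ζ : (0,1) → ℝ by ζ(a) = log(2a) if a ≤ 1/2 and ζ(a) = -log(2(1-a)) if a ≥ 1/2. Then for all a, b ∈ (0,1): a²/b + (1-a)²/(1-b) ≤ exp(|ζ(a) - ζ(b)|²). -/
/-!
Both sides are invariant under `(a, b) ↦ (1 - a, 1 - b)`, so we may take `a ≤ 1/2`.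
If also `b ≤ 1/2`, then `a + b ≤ 1` gives `b (1 - b) ≥ a b`, so the left side is at most
`a/b + b/a - 1 = 2 cosh s - 1` with `s = log a - log b = ζ a - ζ b`, and
`2 cosh s - 1 ≤ 2 exp (s²/2) - 1 ≤ exp (s²)`.
If `b > 1/2`, the left side `G(a, b)` factors as `(1 + p² + 2pq) G(1/2, b)` with
`0 ≤ p = 1 - 2a ≤ -ζ a` and `0 ≤ q = 2b - 1 ≤ ζ b`; the first factor is at most
`exp (ζ a² - 2 ζ a ζ b)` and the second, by the first case after reflection, at most `exp (ζ b²)`.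
-/

/-- The map `ζ`, inverse of the cumulative distribution function of the two-sided
exponential density. -/
noncomputable def zetaFn (a : ℝ) : ℝ :=
  if a ≤ 1 / 2 then Real.log (2 * a) else - Real.log (2 * (1 - a))

open Real

/-- `∫ (dμ_a/dμ_b) dμ_a` for the Bernoulli measures `μ_a = (a, 1 - a)`, i.e. `1 + χ²(μ_a ‖ μ_b)`. -/
noncomputable def bernoulliChiSq (a b : ℝ) : ℝ := a ^ 2 / b + (1 - a) ^ 2 / (1 - b)

lemma bernoulliChiSq_one_sub (a b : ℝ) : bernoulliChiSq (1 - a) (1 - b) = bernoulliChiSq a b := by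
  simp only [bernoulliChiSq, sub_sub_cancel, add_comm]

lemma bernoulliChiSq_eq_one_add (a : ℝ) {b : ℝ} (hb0 : 0 < b) (hb1 : b < 1) :
    bernoulliChiSq a b = 1 + (a - b) ^ 2 / (b * (1 - b)) := by
  have : 1 - b ≠ 0 := by linarith
  unfold bernoulliChiSq
  field_simp
  ring

lemma zetaFn_one_sub (a : ℝ) : zetaFn (1 - a) = -zetaFn a := by
  unfold zetaFn
  split_ifs with h₁ h₂ h₂
  · rw [show a = 1 / 2 by linarith]; norm_num
  · rw [neg_neg]
  · rw [sub_sub_cancel]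
  · linarith

lemma zetaFn_half : zetaFn (1 / 2) = 0 := by
  simp [zetaFn]

lemma zetaFn_le_two_mul_sub_one {a : ℝ} (ha0 : 0 < a) (ha : a ≤ 1 / 2) :
    zetaFn a ≤ 2 * a - 1 := by
  rw [zetaFn, if_pos ha]
  exact log_le_sub_one_of_pos (by positivity)

lemma two_mul_sub_one_le_zetaFn {b : ℝ} (hb : 1 / 2 ≤ b) (hb1 : b < 1) :
    2 * b - 1 ≤ zetaFn b := by
  have := zetaFn_le_two_mul_sub_one (a := 1 - b) (by linarith) (by linarith)
  rw [zetaFn_one_sub] at this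
  linarith

lemma two_mul_cosh_sub_one_le_exp_sq (s : ℝ) : 2 * cosh s - 1 ≤ exp (s ^ 2) := by
  have hsq : exp (s ^ 2) = exp (s ^ 2 / 2) ^ 2 := by rw [← exp_nat_mul]; ring_nf
  nlinarith [cosh_le_exp_half_sq s, sq_nonneg (exp (s ^ 2 / 2) - 1)]

lemma bernoulliChiSq_le_exp_sq_log_sub {a b : ℝ} (ha : 0 < a) (hb : 0 < b) (hab : a + b ≤ 1) :
    bernoulliChiSq a b ≤ exp ((log a - log b) ^ 2) :=
  calc bernoulliChiSq a b = 1 + (a - b) ^ 2 / (b * (1 - b)) :=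
        bernoulliChiSq_eq_one_add a hb (by linarith)
    _ ≤ 1 + (a - b) ^ 2 / (a * b) := by
        gcongr 1 + _ / ?_
        nlinarith
    _ = 2 * cosh (log a - log b) - 1 := by
        rw [cosh_eq, exp_neg, exp_sub, exp_log ha, exp_log hb]
        field_simp
        ring
    _ ≤ exp ((log a - log b) ^ 2) := two_mul_cosh_sub_one_le_exp_sq _

lemma bernoulliChiSq_le_of_le_half {a b : ℝ} (ha0 : 0 < a) (ha : a ≤ 1 / 2) (hb0 : 0 < b)
    (hb : b ≤ 1 / 2) : bernoulliChiSq a b ≤ exp ((zetaFn a - zetaFn b) ^ 2) := by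
  have hζ : zetaFn a - zetaFn b = log a - log b := by
    rw [zetaFn, zetaFn, if_pos ha, if_pos hb, log_mul two_ne_zero ha0.ne',
      log_mul two_ne_zero hb0.ne']
    ring
  rw [hζ]
  exact bernoulliChiSq_le_exp_sq_log_sub ha0 hb0 (by linarith)

lemma bernoulliChiSq_half_le {b : ℝ} (hb : 1 / 2 ≤ b) (hb1 : b < 1) :
    bernoulliChiSq (1 / 2) b ≤ exp (zetaFn b ^ 2) := by
  have h := bernoulliChiSq_le_of_le_half (a := 1 / 2) (b := 1 - b) one_half_pos le_rfl
    (by linarith) (by linarith)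
  rwa [← bernoulliChiSq_one_sub, zetaFn_one_sub, zetaFn_half, sub_sub_cancel, zero_sub,
    neg_neg, show (1 : ℝ) - 1 / 2 = 1 / 2 by norm_num] at h

lemma bernoulliChiSq_eq_mul_half {a b : ℝ} (hb0 : 0 < b) (hb1 : b < 1) :
    bernoulliChiSq a b =
      (1 + (1 - 2 * a) ^ 2 + 2 * (1 - 2 * a) * (2 * b - 1)) * bernoulliChiSq (1 / 2) b := by
  have : 1 - b ≠ 0 := by linarith
  unfold bernoulliChiSq
  field_simp
  ring

lemma bernoulliChiSq_le_of_le_half_le {a b : ℝ} (ha0 : 0 < a) (ha : a ≤ 1 / 2) (hb : 1 / 2 ≤ b)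
    (hb1 : b < 1) : bernoulliChiSq a b ≤ exp ((zetaFn a - zetaFn b) ^ 2) := by
  set x := zetaFn a
  set y := zetaFn b
  have hx := zetaFn_le_two_mul_sub_one ha0 ha
  have hy := two_mul_sub_one_le_zetaFn hb hb1
  have hfactor : 1 + (1 - 2 * a) ^ 2 + 2 * (1 - 2 * a) * (2 * b - 1) ≤ exp (x ^ 2 - 2 * x * y) :=
    calc _ ≤ exp ((1 - 2 * a) ^ 2 + 2 * (1 - 2 * a) * (2 * b - 1)) := by
          linarith [add_one_le_exp ((1 - 2 * a) ^ 2 + 2 * (1 - 2 * a) * (2 * b - 1))]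
      _ ≤ exp (x ^ 2 - 2 * x * y) := by
          gcongr
          nlinarith [mul_le_mul (by linarith : 1 - 2 * a ≤ -x) hy (by linarith) (by linarith)]
  calc bernoulliChiSq a b
      = (1 + (1 - 2 * a) ^ 2 + 2 * (1 - 2 * a) * (2 * b - 1)) * bernoulliChiSq (1 / 2) b :=
        bernoulliChiSq_eq_mul_half (by linarith) hb1
    _ ≤ exp (x ^ 2 - 2 * x * y) * exp (y ^ 2) :=
        mul_le_mul hfactor (bernoulliChiSq_half_le hb hb1)
          (by rw [bernoulliChiSq]; positivity) (exp_nonneg _)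
    _ = exp ((x - y) ^ 2) := by rw [← exp_add]; ring_nf

theorem stmt_7 (a b : ℝ) (ha : a ∈ Set.Ioo (0 : ℝ) 1) (hb : b ∈ Set.Ioo (0 : ℝ) 1) :
    a ^ 2 / b + (1 - a) ^ 2 / (1 - b) ≤ Real.exp (|zetaFn a - zetaFn b| ^ 2) := by
  change bernoulliChiSq a b ≤ _
  rw [sq_abs]
  wlog ha2 : a ≤ 1 / 2 generalizing a b
  · have h := this (1 - a) (1 - b) ⟨by linarith [ha.2], by linarith [ha.1]⟩
      ⟨by linarith [hb.2], by linarith [hb.1]⟩ (by linarith)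
    rwa [bernoulliChiSq_one_sub, zetaFn_one_sub, zetaFn_one_sub, neg_sub_neg, ← neg_sub,
      neg_sq] at h
  rcases le_or_gt b (1 / 2) with hb2 | hb2
  · exact bernoulliChiSq_le_of_le_half ha.1 ha2 hb.1 hb2
  · exact bernoulliChiSq_le_of_le_half_le ha.1 ha2 hb2.le hb.2
end

section
/- Let φ(t) = (1/2) exp(-|t|) be the two-sided exponential density. Then for every s ∈ ℝ: ∫_ℝ φ(t+s)²/φ(t) dt = (2/3) exp(|s|) + (1/3) exp(-2|s|), and this quantity is at most exp(s²). -/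
/-!
For `s ≥ 0` the exponent `|t| - 2|t + s|` of `φ(t + s)² / φ(t)` is affine on each of
`(-∞, -s]`, `[-s, 0]` and `[0, ∞)`, so the integral is a sum of three elementary exponential
integrals; `s < 0` reduces to `-s` under `t ↦ -t`.
-/

open Real Set MeasureTheory

theorem integral_exp_mul {a b c : ℝ} (hc : c ≠ 0) :
    ∫ x in a..b, exp (c * x) = (exp (c * b) - exp (c * a)) / c := by
  rw [intervalIntegral.integral_comp_mul_left (fun x ↦ exp x) hc, integral_exp, smul_eq_mul,
    inv_mul_eq_div]

theorem integral_exp_abs_sub_two_mul_abs_add_of_nonneg {s : ℝ} (hs : 0 ≤ s) :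
    ∫ t, exp (|t| - 2 * |t + s|) = 4 / 3 * exp s + 2 / 3 * exp (-2 * s) := by
  set g : ℝ → ℝ := fun t ↦ exp (|t| - 2 * |t + s|)
  have h_left : EqOn g (fun t ↦ exp (2 * s) * exp (1 * t)) (Iic (-s)) := fun t ht ↦ by
    have ht : t ≤ -s := ht
    simp only [g, ← exp_add]
    rw [abs_of_nonpos (by linarith), abs_of_nonpos (by linarith)]
    ring_nf
  have h_mid : EqOn g (fun t ↦ exp (-2 * s) * exp (-3 * t)) (uIcc (-s) 0) := fun t ht ↦ by
    rw [uIcc_of_le (by linarith)] at ht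
    simp only [g, ← exp_add]
    rw [abs_of_nonpos ht.2, abs_of_nonneg (by linarith [ht.1])]
    ring_nf
  have h_right : EqOn g (fun t ↦ exp (-2 * s) * exp (-1 * t)) (Ioi 0) := fun t ht ↦ by
    have ht : 0 < t := ht
    simp only [g, ← exp_add]
    rw [abs_of_pos ht, abs_of_pos (by linarith)]
    ring_nf
  have hi_left : IntegrableOn g (Iic (-s)) :=
    IntegrableOn.congr_fun ((integrableOn_exp_mul_Iic one_pos _).const_mul _) h_left.symm
      measurableSet_Iic
  have hi_right : IntegrableOn g (Ioi 0) :=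
    IntegrableOn.congr_fun ((integrableOn_exp_mul_Ioi neg_one_lt_zero _).const_mul _) h_right.symm
      measurableSet_Ioi
  have hi_mid : IntervalIntegrable g volume (-s) 0 :=
    (by fun_prop : Continuous g).intervalIntegrable _ _
  have hi_Ioi : IntegrableOn g (Ioi (-s)) := by
    rw [← Ioc_union_Ioi_eq_Ioi (by linarith : -s ≤ 0)]
    exact ((intervalIntegrable_iff_integrableOn_Ioc_of_le (by linarith)).1 hi_mid).union hi_right
  rw [← intervalIntegral.integral_Iic_add_Ioi hi_left hi_Ioi,
    ← intervalIntegral.integral_interval_add_Ioi' hi_mid hi_right,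
    setIntegral_congr_fun measurableSet_Iic h_left, intervalIntegral.integral_congr h_mid,
    setIntegral_congr_fun measurableSet_Ioi h_right, integral_const_mul,
    intervalIntegral.integral_const_mul, integral_const_mul, integral_exp_mul_Iic one_pos,
    integral_exp_mul (by norm_num), integral_exp_mul_Ioi (by norm_num)]
  have h1 : exp (2 * s) * exp (1 * -s) = exp s := by rw [← exp_add]; ring_nf
  have h2 : exp (-2 * s) * exp (-3 * -s) = exp s := by rw [← exp_add]; ring_nf
  simp only [mul_zero, exp_zero, mul_sub, mul_div_assoc']
  rw [h1, h2]
  ring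

theorem integral_exp_abs_sub_two_mul_abs_add (s : ℝ) :
    ∫ t, exp (|t| - 2 * |t + s|) = 4 / 3 * exp |s| + 2 / 3 * exp (-2 * |s|) := by
  rcases le_total 0 s with hs | hs
  · rw [abs_of_nonneg hs, integral_exp_abs_sub_two_mul_abs_add_of_nonneg hs]
  · rw [abs_of_nonpos hs, ← integral_exp_abs_sub_two_mul_abs_add_of_nonneg (neg_nonneg.2 hs),
      ← integral_neg_eq_self]
    congr with t
    rw [← abs_neg t, ← abs_neg (-t + s), neg_add, neg_neg]

theorem laplace_sq_div_laplace (s t : ℝ) :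
    (1 / 2 * exp (-|t + s|)) ^ 2 / (1 / 2 * exp (-|t|)) = 1 / 2 * exp (|t| - 2 * |t + s|) := by
  have h : exp (-|t + s|) ^ 2 = exp (|t| - 2 * |t + s|) * exp (-|t|) := by
    rw [← exp_add, ← exp_nat_mul]
    ring_nf
  rw [div_eq_iff (by positivity), mul_pow, h]
  ring

theorem exp_neg_le_taylor_four {y : ℝ} (hy : 0 ≤ y) :
    exp (-y) ≤ 1 - y + y ^ 2 / 2 - y ^ 3 / 6 + y ^ 4 / 24 := by
  set Q : ℝ := 1 + y + y ^ 2 / 2 + y ^ 3 / 6 + y ^ 4 / 24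
  have hQ : Q ≤ exp y := by
    simpa [Finset.sum_range_succ, Nat.factorial, Q] using sum_le_exp_of_nonneg hy 5
  have h_prod :
      (1 - y + y ^ 2 / 2 - y ^ 3 / 6 + y ^ 4 / 24) * Q = 1 + y ^ 6 / 72 + y ^ 8 / 576 := by
    ring
  calc exp (-y) ≤ Q⁻¹ := by rw [exp_neg]; exact inv_anti₀ (by positivity) hQ
    _ ≤ _ := by
      rw [inv_le_iff_one_le_mul₀ (by positivity), h_prod]
      linarith [pow_nonneg hy 6, pow_nonneg hy 8]

theorem exp_le_taylor_five_of_le_one {x : ℝ} (hx₀ : 0 ≤ x) (hx₁ : x ≤ 1) :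
    exp x ≤ 1 + x + x ^ 2 / 2 + x ^ 3 / 6 + x ^ 4 / 24 + x ^ 5 / 100 := by
  have h := exp_bound' hx₀ hx₁ (n := 5) (by norm_num)
  simp only [Finset.sum_range_succ, Finset.sum_range_zero, Nat.factorial] at h
  norm_num at h
  linarith

/-- The left side is `𝔼[exp (x Y)]` for `Y` equal to `1` or `-2` with probabilities `2/3`, `1/3`:
`Y` has mean `0` and variance `2`, so both sides agree to second order at `0`, and the cubic
term `-x³/3` of the left side decides for small `x`. -/
theorem two_thirds_exp_add_third_exp_neg_two_mul_le_exp_sq {x : ℝ} (hx : 0 ≤ x) :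
    2 / 3 * exp x + 1 / 3 * exp (-2 * x) ≤ exp (x ^ 2) := by
  rcases le_or_gt x 1 with hx₁ | hx₁
  · have h_pos := exp_le_taylor_five_of_le_one hx hx₁
    have h_neg := exp_neg_le_taylor_four (y := 2 * x) (by positivity)
    rw [← neg_mul] at h_neg
    have h_sq := quadratic_le_exp_of_nonneg (sq_nonneg x)
    nlinarith [pow_nonneg hx 3, pow_nonneg hx 4, pow_le_one₀ hx hx₁ (n := 5)]
  · have h_neg : exp (-2 * x) ≤ exp x := exp_le_exp.mpr (by linarith)
    have h_pos : exp x ≤ exp (x ^ 2) := exp_le_exp.mpr (by nlinarith)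
    linarith

theorem stmt_8 (s : ℝ) :
    (∫ t : ℝ, ((1 / 2) * Real.exp (-|t + s|)) ^ 2 / ((1 / 2) * Real.exp (-|t|))) =
      (2 / 3) * Real.exp |s| + (1 / 3) * Real.exp (-2 * |s|) ∧
    (2 / 3) * Real.exp |s| + (1 / 3) * Real.exp (-2 * |s|) ≤ Real.exp (s ^ 2) := by
  refine ⟨?_, ?_⟩
  · simp_rw [laplace_sq_div_laplace, integral_const_mul, integral_exp_abs_sub_two_mul_abs_add]
    ring
  · simpa only [sq_abs] using two_thirds_exp_add_third_exp_neg_two_mul_le_exp_sq (abs_nonneg s)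
end

section
/- For every t ≥ 0, (exp(t) - 1)² ≤ exp(3t²/2) - 1. -/
/-!
For `t ≥ 4/3` we have `2t ≤ 3t²/2`, so `(eᵗ - 1)² ≤ e²ᵗ - 1 ≤ e^{3t²/2} - 1`.
On `[0, 4/3]` we bound `eᵗ` above by its degree-four Taylor polynomial plus a fifth-order
remainder, bound `e^{3t²/2}` below by its degree-three Taylor polynomial, and compare the
resulting polynomials.
-/

open Finset

namespace Real

theorem abs_exp_sub_sum_le {x : ℝ} {n : ℕ} (hx : |x| / n.succ ≤ 1 / 2) :
    |exp x - ∑ m ∈ range n, x ^ m / m.factorial| ≤ |x| ^ n / n.factorial * 2 := by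
  have hxc : ‖(x : ℂ)‖ / n.succ ≤ 1 / 2 := mod_cast hx
  convert Complex.exp_bound' hxc <;> norm_cast

theorem exp_le_quintic {x : ℝ} (hx₀ : 0 ≤ x) (hx₃ : x ≤ 3) :
    exp x ≤ 1 + x + x ^ 2 / 2 + x ^ 3 / 6 + x ^ 4 / 24 + x ^ 5 / 60 := by
  have h := (abs_le.1 (abs_exp_sub_sum_le (x := x) (n := 5)
    (by rw [abs_of_nonneg hx₀]; norm_num; linarith))).2
  simp only [sum_range_succ, range_zero, sum_empty, abs_of_nonneg hx₀, Nat.factorial] at h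
  norm_num at h
  linarith

theorem cubic_le_exp_of_nonneg {x : ℝ} (hx : 0 ≤ x) :
    1 + x + x ^ 2 / 2 + x ^ 3 / 6 ≤ exp x := by
  have h := sum_le_exp_of_nonneg hx 4
  simp only [sum_range_succ, range_zero, sum_empty, Nat.factorial] at h
  norm_num at h
  linarith

theorem sq_exp_sub_one_le_of_four_thirds_le {t : ℝ} (ht : 4 / 3 ≤ t) :
    (exp t - 1) ^ 2 ≤ exp (3 * t ^ 2 / 2) - 1 := by
  have h2t : exp (2 * t) ≤ exp (3 * t ^ 2 / 2) := exp_le_exp.2 (by nlinarith)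
  have hexp2 : exp (2 * t) = exp t ^ 2 := by rw [← exp_nat_mul]; norm_num
  nlinarith [one_le_exp (by linarith : 0 ≤ t)]

theorem sq_exp_sub_one_le_of_le_four_thirds {t : ℝ} (h₀ : 0 ≤ t) (h₁ : t ≤ 4 / 3) :
    (exp t - 1) ^ 2 ≤ exp (3 * t ^ 2 / 2) - 1 := by
  have hpoly : (1 + t / 2 + t ^ 2 / 6 + t ^ 3 / 24 + t ^ 4 / 60) ^ 2 ≤
      3 / 2 + 9 * t ^ 2 / 8 + 9 * t ^ 4 / 16 := by
    have h := sub_nonneg.2 h₁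
    nlinarith [sq_nonneg (t - 1), mul_nonneg h₀ h, mul_nonneg (mul_nonneg h₀ h₀) h,
      mul_nonneg (pow_nonneg h₀ 3) h, mul_nonneg (pow_nonneg h₀ 4) h,
      mul_nonneg (pow_nonneg h₀ 5) h, mul_nonneg (pow_nonneg h₀ 6) h,
      mul_nonneg (pow_nonneg h₀ 7) h]
  have hupper := exp_le_quintic h₀ (by linarith)
  have hlower := cubic_le_exp_of_nonneg (by positivity : 0 ≤ 3 * t ^ 2 / 2)
  calc (exp t - 1) ^ 2
      ≤ (t + t ^ 2 / 2 + t ^ 3 / 6 + t ^ 4 / 24 + t ^ 5 / 60) ^ 2 :=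
        pow_le_pow_left₀ (by linarith [one_le_exp h₀]) (by linarith) 2
    _ = t ^ 2 * (1 + t / 2 + t ^ 2 / 6 + t ^ 3 / 24 + t ^ 4 / 60) ^ 2 := by ring
    _ ≤ t ^ 2 * (3 / 2 + 9 * t ^ 2 / 8 + 9 * t ^ 4 / 16) := by gcongr
    _ ≤ exp (3 * t ^ 2 / 2) - 1 := by linarith

end Real

theorem stmt_9 (t : ℝ) (ht : 0 ≤ t) :
    (Real.exp t - 1) ^ 2 ≤ Real.exp (3 * t ^ 2 / 2) - 1 := by
  rcases le_total t (4 / 3) with hsmall | hlarge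
  · exact Real.sq_exp_sub_one_le_of_le_four_thirds ht hsmall
  · exact Real.sq_exp_sub_one_le_of_four_thirds_le hlarge
end

section
/- Let φ : ℝ → (0, +∞) be a continuous probability density such that log φ is Lipschitz with constant M ≥ 0. Then for every s ∈ ℝ, the quantity θ(s) = ∫_ℝ φ(t+s)²/φ(t) dt satisfies (1/2) log θ(s) ≤ (3/4) M² s². -/
/-!
Write `a = M |s|`. The Lipschitz bound on `log φ` confines the ratio `r = φ(t+s)/φ(t)` to
`[e^{-a}, e^a]`, where the chord inequality `(r - e^{-a})(e^a - r) ≥ 0` gives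
`r² ≤ 2 cosh a · r - 1`. Multiplying by `φ(t)` and integrating, with `∫ φ(t+s) dt = ∫ φ = 1`,
yields `θ(s) ≤ 2 cosh a - 1 ≤ 2 e^{a²/2} - 1 ≤ e^{3a²/2}`.
-/

open MeasureTheory Real

theorem Real.sq_le_two_mul_cosh_mul_sub_one {a r : ℝ} (hr : 0 < r) (h : |log r| ≤ a) :
    r ^ 2 ≤ 2 * cosh a * r - 1 := by
  obtain ⟨hlo, hhi⟩ := abs_le.mp h
  have hlo' : exp (-a) ≤ r := by simpa [exp_log hr] using exp_le_exp.mpr hlo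
  have hhi' : r ≤ exp a := by simpa [exp_log hr] using exp_le_exp.mpr hhi
  have hchord : 0 ≤ (r - exp (-a)) * (exp a - r) := mul_nonneg (by linarith) (by linarith)
  have hinv : exp (-a) * exp a = 1 := by rw [← exp_add, neg_add_cancel, exp_zero]
  rw [cosh_eq]
  nlinarith

theorem Real.sq_div_le_two_mul_cosh_mul_sub {a x y : ℝ} (hx : 0 < x) (hy : 0 < y)
    (h : |log x - log y| ≤ a) : x ^ 2 / y ≤ 2 * cosh a * x - y := by
  have hratio : (x / y) ^ 2 ≤ 2 * cosh a * (x / y) - 1 :=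
    sq_le_two_mul_cosh_mul_sub_one (div_pos hx hy) (by rwa [log_div hx.ne' hy.ne'])
  calc x ^ 2 / y = (x / y) ^ 2 * y := by field_simp
    _ ≤ (2 * cosh a * (x / y) - 1) * y := by gcongr
    _ = 2 * cosh a * x - y := by field_simp

theorem Real.two_mul_cosh_sub_one_le_exp (a : ℝ) : 2 * cosh a - 1 ≤ exp (3 / 2 * a ^ 2) := by
  set u := exp (a ^ 2 / 2)
  have hu : 1 ≤ u := one_le_exp (by positivity)
  have hcube : exp (3 / 2 * a ^ 2) = u ^ 3 := by rw [← exp_nat_mul]; ring_nf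
  -- `u ^ 3 - 2 * u + 1 = (u - 1) * (u ^ 2 + u - 1)`
  have hfactor : 0 ≤ (u - 1) * (u ^ 2 + u - 1) := mul_nonneg (by linarith) (by nlinarith)
  rw [hcube]
  nlinarith [cosh_le_exp_half_sq a]

theorem MeasureTheory.integral_sq_div_le_two_mul_cosh_mul_sub {α : Type*} [MeasurableSpace α]
    {μ : Measure α} {f g : α → ℝ} {a : ℝ} (hf : Integrable f μ) (hg : Integrable g μ)
    (hf0 : ∀ᵐ x ∂μ, 0 < f x) (hg0 : ∀ᵐ x ∂μ, 0 < g x)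
    (h : ∀ᵐ x ∂μ, |log (f x) - log (g x)| ≤ a) :
    ∫ x, f x ^ 2 / g x ∂μ ≤ 2 * cosh a * ∫ x, f x ∂μ - ∫ x, g x ∂μ := by
  rw [← integral_const_mul, ← integral_sub (hf.const_mul _) hg]
  refine integral_mono_of_nonneg ?_ ((hf.const_mul _).sub hg) ?_
  · filter_upwards [hg0] with x hx using by positivity
  · filter_upwards [hf0, hg0, h] with x hfx hgx hx using sq_div_le_two_mul_cosh_mul_sub hfx hgx hx

theorem stmt_10_general (φ : ℝ → ℝ) (hpos : ∀ t, 0 < φ t)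
    (hint : ∫ t, φ t = 1) (M : ℝ)
    (hLip : ∀ x y, |Real.log (φ x) - Real.log (φ y)| ≤ M * |x - y|) (s : ℝ) :
    (1 / 2) * Real.log (∫ t, (φ (t + s)) ^ 2 / φ t) ≤ (3 / 4) * M ^ 2 * s ^ 2 := by
  have hφ : Integrable φ := .of_integral_ne_zero (by simp [hint])
  have hθ : ∫ t, φ (t + s) ^ 2 / φ t ≤ exp (3 / 2 * (M * |s|) ^ 2) := by
    have := integral_sq_div_le_two_mul_cosh_mul_sub (hφ.comp_add_right s) hφ
      (.of_forall fun t ↦ hpos (t + s)) (.of_forall hpos)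
      (.of_forall fun t ↦ by simpa using hLip (t + s) t)
    rw [integral_add_right_eq_self φ s, hint, mul_one] at this
    exact this.trans (two_mul_cosh_sub_one_le_exp _)
  have hθ0 : 0 ≤ ∫ t, φ (t + s) ^ 2 / φ t :=
    integral_nonneg fun t ↦ div_nonneg (sq_nonneg _) (hpos t).le
  have hlog : log (∫ t, φ (t + s) ^ 2 / φ t) ≤ 3 / 2 * (M * |s|) ^ 2 := by
    rcases hθ0.eq_or_lt with h0 | h0
    · rw [← h0, log_zero]; positivity
    · exact (log_le_iff_le_exp h0).mpr hθ
  rw [mul_pow, sq_abs] at hlog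
  linarith

theorem stmt_10 (φ : ℝ → ℝ) (hpos : ∀ t, 0 < φ t) (hcont : Continuous φ)
    (hint : ∫ t, φ t = 1) (M : ℝ) (hM : 0 ≤ M)
    (hLip : ∀ x y, |Real.log (φ x) - Real.log (φ y)| ≤ M * |x - y|) (s : ℝ) :
    (1 / 2) * Real.log (∫ t, (φ (t + s)) ^ 2 / φ t) ≤ (3 / 4) * M ^ 2 * s ^ 2 :=
  stmt_10_general φ hpos hint M hLip s
end

section
/- Let φ : ℝ → (0, +∞) be a probability density such that ψ = log φ is differentiable and ψ' is Lipschitz with constant M ≥ 0. Then for every s ∈ ℝ, θ(s) = ∫_ℝ φ(t+s)²/φ(t) dt satisfies (1/2) log θ(s) ≤ M s². -/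
/-!
Write `φ = exp ψ`. Then `φ (t + s) ^ 2 / φ t = exp (2 ψ (t + s) - ψ t - ψ (t + 2 s)) * φ (t + 2 s)`, and
the exponent is minus a second difference of `ψ` with step `s`. A first-order Taylor bound with
Lipschitz derivative bounds each half of that second difference by `M s²`, so the integrand is
at most `exp (2 M s²)` times a translate of `φ`, whose integral is `1`.
-/

open MeasureTheory Real

section TaylorBound

variable {𝕜 F : Type*} [RCLike 𝕜] [NormedAddCommGroup F] [NormedSpace 𝕜 F] {f : 𝕜 → F} {M : ℝ}

theorem norm_sub_sub_smul_deriv_le_of_lipschitz_deriv (hf : Differentiable 𝕜 f)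
    (hLip : ∀ x y, ‖deriv f x - deriv f y‖ ≤ M * ‖x - y‖) (x h : 𝕜) :
    ‖f (x + h) - f x - h • deriv f x‖ ≤ M * ‖h‖ ^ 2 := by
  have hM : 0 ≤ M := by simpa using (norm_nonneg _).trans (hLip 1 0)
  set g : 𝕜 → F := fun y => f y - (y - x) • deriv f x
  have hg : ∀ y, HasDerivAt g (deriv f y - deriv f x) y := fun y =>
    ((hf y).hasDerivAt.sub (((hasDerivAt_id y).sub_const x).smul_const (deriv f x))).congr_deriv
      (by rw [one_smul])
  have hg_deriv_le : ∀ y ∈ Metric.closedBall x ‖h‖, ‖deriv g y‖ ≤ M * ‖h‖ := fun y hy => by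
    rw [(hg y).deriv]
    exact (hLip y x).trans (mul_le_mul_of_nonneg_left (mem_closedBall_iff_norm.mp hy) hM)
  have hg_sub := (convex_closedBall x ‖h‖).norm_image_sub_le_of_norm_deriv_le
    (fun y _ => (hg y).differentiableAt) hg_deriv_le (Metric.mem_closedBall_self (norm_nonneg h))
    (by simp : x + h ∈ Metric.closedBall x ‖h‖)
  calc ‖f (x + h) - f x - h • deriv f x‖ = ‖g (x + h) - g x‖ := by
        congr 1; simp only [g, add_sub_cancel_left, sub_self, zero_smul, sub_zero]; abel
    _ ≤ M * ‖h‖ ^ 2 := by simpa [sq, mul_assoc] using hg_sub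

theorem norm_second_difference_le_of_lipschitz_deriv (hf : Differentiable 𝕜 f)
    (hLip : ∀ x y, ‖deriv f x - deriv f y‖ ≤ M * ‖x - y‖) (x h : 𝕜) :
    ‖f (x + h) + f (x - h) - (2 : 𝕜) • f x‖ ≤ 2 * M * ‖h‖ ^ 2 := by
  have hplus := norm_sub_sub_smul_deriv_le_of_lipschitz_deriv hf hLip x h
  have hminus := norm_sub_sub_smul_deriv_le_of_lipschitz_deriv hf hLip x (-h)
  rw [← sub_eq_add_neg, norm_neg] at hminus
  calc ‖f (x + h) + f (x - h) - (2 : 𝕜) • f x‖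
      = ‖(f (x + h) - f x - h • deriv f x) + (f (x - h) - f x - (-h) • deriv f x)‖ := by
        congr 1; rw [two_smul, neg_smul]; abel
    _ ≤ 2 * M * ‖h‖ ^ 2 := by linarith [norm_add_le _ _ |>.trans (add_le_add hplus hminus)]

end TaylorBound

theorem sq_div_le_exp_mul_of_lipschitz_deriv_log {φ : ℝ → ℝ} (hpos : ∀ t, 0 < φ t) {M : ℝ}
    (hdiff : Differentiable ℝ (fun t => log (φ t)))
    (hLip : ∀ x y, |deriv (fun t => log (φ t)) x - deriv (fun t => log (φ t)) y| ≤
      M * |x - y|) (t s : ℝ) :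
    φ (t + s) ^ 2 / φ t ≤ exp (2 * M * s ^ 2) * φ (t + 2 * s) := by
  have hsecond := norm_second_difference_le_of_lipschitz_deriv hdiff hLip (t + s) s
  simp only [Real.norm_eq_abs, sq_abs, smul_eq_mul, add_sub_cancel_right,
    add_assoc, ← two_mul] at hsecond
  calc φ (t + s) ^ 2 / φ t = exp (2 * log (φ (t + s)) - log (φ t)) := by
        rw [exp_sub, two_mul, exp_add, exp_log (hpos _), exp_log (hpos _), sq]
    _ ≤ exp (2 * M * s ^ 2 + log (φ (t + 2 * s))) :=
        exp_le_exp.mpr (by linarith [(abs_le.mp hsecond).1])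
    _ = exp (2 * M * s ^ 2) * φ (t + 2 * s) := by rw [exp_add, exp_log (hpos _)]

theorem Real.log_le_of_le_exp {x a : ℝ} (hx : 0 ≤ x) (ha : 0 ≤ a) (h : x ≤ exp a) : log x ≤ a := by
  rcases hx.eq_or_lt with rfl | hx
  · simpa using ha
  · exact (log_le_iff_le_exp hx).mpr h

theorem stmt_11_general (φ : ℝ → ℝ) (hpos : ∀ t, 0 < φ t)
    (hint : ∫ t, φ t = 1) (M : ℝ)
    (hdiff : Differentiable ℝ (fun t => Real.log (φ t)))
    (hLip : ∀ x y, |deriv (fun t => Real.log (φ t)) x - deriv (fun t => Real.log (φ t)) y| ≤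
      M * |x - y|) (s : ℝ) :
    (1 / 2) * Real.log (∫ t, (φ (t + s)) ^ 2 / φ t) ≤ M * s ^ 2 := by
  have hM : 0 ≤ M := by simpa using (abs_nonneg _).trans (hLip 1 0)
  have hφ : Integrable φ := Integrable.of_integral_ne_zero (by simp [hint])
  have hθ : ∫ t, φ (t + s) ^ 2 / φ t ≤ exp (2 * M * s ^ 2) :=
    calc ∫ t, φ (t + s) ^ 2 / φ t ≤ ∫ t, exp (2 * M * s ^ 2) * φ (t + 2 * s) :=
          integral_mono_of_nonneg (ae_of_all _ fun t => by have := hpos t; positivity)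
            ((hφ.comp_add_right _).const_mul _)
            (ae_of_all _ (sq_div_le_exp_mul_of_lipschitz_deriv_log hpos hdiff hLip · s))
      _ = exp (2 * M * s ^ 2) := by rw [integral_const_mul, integral_add_right_eq_self, hint, mul_one]
  have hlog := Real.log_le_of_le_exp (integral_nonneg fun t => by have := hpos t; positivity)
    (by positivity) hθ
  linarith

theorem stmt_11 (φ : ℝ → ℝ) (hpos : ∀ t, 0 < φ t)
    (hint : ∫ t, φ t = 1) (M : ℝ) (hM : 0 ≤ M)
    (hdiff : Differentiable ℝ (fun t => Real.log (φ t)))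
    (hLip : ∀ x y, |deriv (fun t => Real.log (φ t)) x - deriv (fun t => Real.log (φ t)) y| ≤
      M * |x - y|) (s : ℝ) :
    (1 / 2) * Real.log (∫ t, (φ (t + s)) ^ 2 / φ t) ≤ M * s ^ 2 :=
  stmt_11_general φ hpos hint M hdiff hLip s
end

section
/- For the density φ(t) = (2/π)(1+t²)^{-2} on ℝ and any κ > 0: -log(∫_ℝ √(φ(t+κ)φ(t)) dt) = log(1 + κ²/4). -/
/-!
Since `φ(t) = (2/π)(1+t²)⁻²`, the Hellinger integrand `√(φ(t+κ)φ(t))` is `(2/π)` times the product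
of the Lorentzians `(1+(t+κ)²)⁻¹ (1+t²)⁻¹`. Partial fractions give this product an explicit
primitive built from `arctan` and `log`; its limits at `±∞` show that the integral is
`2π/(κ²+4)`, so the affinity is `(1+κ²/4)⁻¹`.
-/

open Real MeasureTheory Filter Topology Bornology

noncomputable def lorentzProductPrimitive (κ t : ℝ) : ℝ :=
  (arctan t + arctan (t + κ)) / (κ ^ 2 + 4) +
    (log (1 + (t + κ) ^ 2) - log (1 + t ^ 2)) / (κ * (κ ^ 2 + 4))

lemma hasDerivAt_lorentzProductPrimitive {κ : ℝ} (hκ : κ ≠ 0) (t : ℝ) :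
    HasDerivAt (lorentzProductPrimitive κ) ((1 + (t + κ) ^ 2)⁻¹ * (1 + t ^ 2)⁻¹) t := by
  have hshift : HasDerivAt (· + κ) 1 t := (hasDerivAt_id t).add_const κ
  have hsq : HasDerivAt (fun t ↦ 1 + t ^ 2) (2 * t) t := by
    simpa using ((hasDerivAt_id t).pow 2).const_add 1
  have hsq_shift : HasDerivAt (fun t ↦ 1 + (t + κ) ^ 2) (2 * (t + κ)) t := by
    simpa using (hshift.pow 2).const_add 1
  have harctan := hasDerivAt_arctan t
  have harctan_shift := hshift.arctan
  have hlog := hsq.log (by positivity)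
  have hlog_shift := hsq_shift.log (by positivity)
  refine (((harctan.add harctan_shift).div_const (κ ^ 2 + 4)).add
    ((hlog_shift.sub hlog).div_const (κ * (κ ^ 2 + 4)))).congr_deriv ?_
  have : (1 + t ^ 2) ≠ 0 := by positivity
  have : (1 + (t + κ) ^ 2) ≠ 0 := by positivity
  have : (κ ^ 2 + 4) ≠ 0 := by positivity
  field_simp
  ring

lemma tendsto_log_one_add_sq_add_sub_log_one_add_sq (κ : ℝ) :
    Tendsto (fun t ↦ log (1 + (t + κ) ^ 2) - log (1 + t ^ 2)) (cobounded ℝ) (𝓝 0) := by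
  -- in the variable `u = t⁻¹` the ratio of the two arguments is continuous at `u = 0`
  have hratio : Tendsto (fun t : ℝ ↦ (1 + (t + κ) ^ 2) / (1 + t ^ 2)) (cobounded ℝ) (𝓝 1) := by
    have hcont : Tendsto (fun u : ℝ ↦ (u ^ 2 + (1 + κ * u) ^ 2) / (u ^ 2 + 1)) (𝓝 0) (𝓝 1) := by
      have : ContinuousAt (fun u : ℝ ↦ (u ^ 2 + (1 + κ * u) ^ 2) / (u ^ 2 + 1)) 0 := by
        fun_prop (disch := positivity)
      simpa using this.tendsto
    refine (hcont.comp tendsto_inv₀_cobounded).congr' ?_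
    filter_upwards [eventually_ne_cobounded 0] with t ht
    simp only [Function.comp_apply]
    have : (1 + t ^ 2) ≠ 0 := by positivity
    field_simp
  have h := (continuousAt_log one_ne_zero).tendsto.comp hratio
  rw [log_one] at h
  refine h.congr fun t ↦ ?_
  exact log_div (by positivity) (by positivity)

lemma tendsto_lorentzProductPrimitive_atTop (κ : ℝ) :
    Tendsto (lorentzProductPrimitive κ) atTop (𝓝 (π / (κ ^ 2 + 4))) := by
  have harctan : Tendsto arctan atTop (𝓝 (π / 2)) :=
    tendsto_nhds_of_tendsto_nhdsWithin tendsto_arctan_atTop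
  have harctan_shift := harctan.comp (tendsto_atTop_add_const_right atTop κ tendsto_id)
  have hlog := (tendsto_log_one_add_sq_add_sub_log_one_add_sq κ).mono_left
    IsOrderBornology.atTop_le_cobounded
  rw [show π / (κ ^ 2 + 4) = (π / 2 + π / 2) / (κ ^ 2 + 4) + 0 / (κ * (κ ^ 2 + 4)) by ring]
  exact ((harctan.add harctan_shift).div_const _).add (hlog.div_const _)

lemma tendsto_lorentzProductPrimitive_atBot (κ : ℝ) :
    Tendsto (lorentzProductPrimitive κ) atBot (𝓝 (-(π / (κ ^ 2 + 4)))) := by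
  have harctan : Tendsto arctan atBot (𝓝 (-(π / 2))) :=
    tendsto_nhds_of_tendsto_nhdsWithin tendsto_arctan_atBot
  have harctan_shift := harctan.comp (tendsto_atBot_add_const_right atBot κ tendsto_id)
  have hlog := (tendsto_log_one_add_sq_add_sub_log_one_add_sq κ).mono_left
    IsOrderBornology.atBot_le_cobounded
  rw [show -(π / (κ ^ 2 + 4)) = (-(π / 2) + -(π / 2)) / (κ ^ 2 + 4) + 0 / (κ * (κ ^ 2 + 4)) by
    ring]
  exact ((harctan.add harctan_shift).div_const _).add (hlog.div_const _)

lemma integrable_inv_one_add_sq_mul_inv_one_add_sq (κ : ℝ) :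
    Integrable fun t : ℝ ↦ (1 + (t + κ) ^ 2)⁻¹ * (1 + t ^ 2)⁻¹ := by
  refine integrable_inv_one_add_sq.bdd_mul (c := 1) (by fun_prop) (ae_of_all _ fun t ↦ ?_)
  rw [norm_inv, Real.norm_of_nonneg (by positivity)]
  exact inv_le_one_of_one_le₀ (by nlinarith)

lemma integral_inv_one_add_sq_mul_inv_one_add_sq {κ : ℝ} (hκ : κ ≠ 0) :
    ∫ t : ℝ, (1 + (t + κ) ^ 2)⁻¹ * (1 + t ^ 2)⁻¹ = 2 * π / (κ ^ 2 + 4) := by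
  rw [integral_of_hasDerivAt_of_tendsto (hasDerivAt_lorentzProductPrimitive hκ)
    (integrable_inv_one_add_sq_mul_inv_one_add_sq κ) (tendsto_lorentzProductPrimitive_atBot κ)
    (tendsto_lorentzProductPrimitive_atTop κ)]
  ring

lemma sqrt_mul_sq_mul_mul_sq {c a b : ℝ} (hc : 0 ≤ c) (ha : 0 ≤ a) (hb : 0 ≤ b) :
    √((c * a ^ 2) * (c * b ^ 2)) = c * (a * b) := by
  rw [show (c * a ^ 2) * (c * b ^ 2) = (c * (a * b)) ^ 2 by ring]
  exact sqrt_sq (by positivity)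

theorem stmt_12 (κ : ℝ) (hκ : 0 < κ) :
    - Real.log (∫ t : ℝ, Real.sqrt
        (((2 / Real.pi) * (1 + (t + κ) ^ 2)⁻¹ ^ 2) * ((2 / Real.pi) * (1 + t ^ 2)⁻¹ ^ 2))) =
      Real.log (1 + κ ^ 2 / 4) := by
  have hintegrand (t : ℝ) :
      √(((2 / π) * (1 + (t + κ) ^ 2)⁻¹ ^ 2) * ((2 / π) * (1 + t ^ 2)⁻¹ ^ 2)) =
        2 / π * ((1 + (t + κ) ^ 2)⁻¹ * (1 + t ^ 2)⁻¹) :=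
    sqrt_mul_sq_mul_mul_sq (by positivity) (by positivity) (by positivity)
  have haffinity : 2 / π * (2 * π / (κ ^ 2 + 4)) = (1 + κ ^ 2 / 4)⁻¹ := by
    field_simp
    ring
  simp only [hintegrand]
  rw [integral_const_mul, integral_inv_one_add_sq_mul_inv_one_add_sq hκ.ne', haffinity,
    log_inv, neg_neg]
end

section
/- Let G be a countable group, F : G → ℝ a bounded function, and λ ∈ (0,1). For g ∈ G define d(g) = ∑_{h ∈ G} |F(gh) - F(h)|² (possibly infinite). For each g let μ_g be the probability measure on a standard Borel space X₀ whose density with respect to a fixed probability measure μ₀ takes only the values ρ_g λ and ρ_g (on a measurable set A_g and its complement, respectively, with ρ_g = (λ μ₀(A_g) + μ₀(X₀ \ A_g))^{-1}). Then for all g, h ∈ G: log ∫_{X₀} (dμ_h/dμ_{gh}) dμ_h ≤ λ^{-2} μ₀(A_{gh} Δ A_h), where Δ denotes symmetric difference. -/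
/-!
Write `S = A h`, `T = A (g * h)` and let `a, b, c, d` be the masses of `S ∩ T`, `S \ T`, `T \ S`
and `(S ∪ T)ᶜ`. The integrand is `ρ_h² / ρ_{gh}` times a function that is constant on these four
cells, so the integral is `x y / z²` with `z = ρ_h⁻¹`, `x = ρ_{gh}⁻¹` and
`y = a L + b L² + c / L + d`. Two applications of `log t ≤ t - 1` give
`log (x y / z²) ≤ (x + y - 2 z) / z`, and the first-order terms cancel:
`x + y - 2 z = (1 - L)² (b + c / L)`, which is controlled by the mass `b + c` of the symmetric
difference, while `z ≥ L`.
-/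

section

open MeasureTheory Set Real

theorem Real.log_mul_div_sq_le {x y z : ℝ} (hx : 0 < x) (hy : 0 < y) (hz : 0 < z) :
    log (x * y / z ^ 2) ≤ (x + y - 2 * z) / z := by
  have hsplit : x * y / z ^ 2 = x / z * (y / z) := by field_simp
  rw [hsplit, log_mul (by positivity) (by positivity)]
  have hlogx := log_le_sub_one_of_pos (div_pos hx hz)
  have hlogy := log_le_sub_one_of_pos (div_pos hy hz)
  calc _ ≤ (x / z - 1) + (y / z - 1) := by gcongr
    _ = _ := by field_simp; ring

theorem log_two_valued_ratio_le {L a b c d : ℝ} (hL : L ∈ Ioo 0 1) (ha : 0 ≤ a) (hb : 0 ≤ b)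
    (hc : 0 ≤ c) (hd : 0 ≤ d) (hsum : a + b + c + d = 1) :
    log ((L * (a + b) + (c + d))⁻¹ ^ 2 / (L * (a + c) + (b + d))⁻¹ *
        (a * L + b * L ^ 2 + c * L⁻¹ + d)) ≤ L⁻¹ ^ 2 * (c + b) := by
  obtain ⟨hL0, hL1⟩ := hL
  have hLinv : 1 ≤ L⁻¹ := (one_le_inv₀ hL0).mpr hL1.le
  have hzL : L ≤ L * (a + b) + (c + d) := by nlinarith
  have hxL : L ≤ L * (a + c) + (b + d) := by nlinarith
  have hy : 0 < a * L + b * L ^ 2 + c * L⁻¹ + d := by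
    nlinarith [mul_nonneg ha (by nlinarith : 0 ≤ L - L ^ 2),
      mul_nonneg hc (by nlinarith : 0 ≤ L⁻¹ - L ^ 2), mul_nonneg hd (by nlinarith : 0 ≤ 1 - L ^ 2)]
  generalize hz : L * (a + b) + (c + d) = z at hzL
  generalize hx : L * (a + c) + (b + d) = x at hxL
  generalize hy' : a * L + b * L ^ 2 + c * L⁻¹ + d = y at hy
  have hz0 : 0 < z := hL0.trans_le hzL
  have hx0 : 0 < x := hL0.trans_le hxL
  have hexpr : z⁻¹ ^ 2 / x⁻¹ * y = x * y / z ^ 2 := by field_simp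
  have hnum : x + y - 2 * z = (1 - L) ^ 2 * (b + c * L⁻¹) := by
    rw [← hx, ← hy', ← hz]; field_simp; ring
  rw [hexpr]
  calc log (x * y / z ^ 2) ≤ (x + y - 2 * z) / z := log_mul_div_sq_le hx0 hy hz0
    _ = (1 - L) ^ 2 * (b + c * L⁻¹) / z := by rw [hnum]
    _ ≤ (b + c * L⁻¹) / L := by
      have hu : 0 ≤ b + c * L⁻¹ := by positivity
      exact div_le_div₀ hu (mul_le_of_le_one_left hu (by nlinarith)) hL0 hzL
    _ ≤ L⁻¹ ^ 2 * (c + b) := by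
      rw [div_le_iff₀ hL0]
      field_simp
      nlinarith

variable {X : Type*} [MeasurableSpace X] {μ : Measure X} {S T : Set X}

theorem setIntegral_ite_mem [IsFiniteMeasure μ] [DecidablePred (· ∈ T)] (hT : MeasurableSet T)
    (p q : ℝ) :
    ∫ x in S, (if x ∈ T then p else q) ∂μ = μ.real (S ∩ T) * p + μ.real (S ∩ Tᶜ) * q := by
  change ∫ x in S, T.piecewise (fun _ => p) (fun _ => q) x ∂μ = _
  rw [integral_piecewise hT integrableOn_const integrableOn_const, setIntegral_const,
    setIntegral_const, measureReal_restrict_apply hT, measureReal_restrict_apply hT.compl,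
    inter_comm T, inter_comm Tᶜ, smul_eq_mul, smul_eq_mul]

theorem integral_ite_mem_ite_mem [IsFiniteMeasure μ] [DecidablePred (· ∈ S)]
    [DecidablePred (· ∈ T)] (hS : MeasurableSet S) (hT : MeasurableSet T) (p q r s : ℝ) :
    ∫ x, (if x ∈ S then (if x ∈ T then p else q) else (if x ∈ T then r else s)) ∂μ =
      μ.real (S ∩ T) * p + μ.real (S ∩ Tᶜ) * q + μ.real (Sᶜ ∩ T) * r + μ.real (Sᶜ ∩ Tᶜ) * s := by
  change ∫ x, S.piecewise (fun x => if x ∈ T then p else q)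
    (fun x => if x ∈ T then r else s) x ∂μ = _
  rw [integral_piecewise hS (Integrable.integrableOn ?_) (Integrable.integrableOn ?_),
    setIntegral_ite_mem hT, setIntegral_ite_mem hT, ← add_assoc]
  all_goals exact Integrable.piecewise hT integrableOn_const integrableOn_const

theorem log_integral_sq_div_two_valued_le [IsProbabilityMeasure μ] [DecidablePred (· ∈ S)]
    [DecidablePred (· ∈ T)] (hS : MeasurableSet S) (hT : MeasurableSet T) {L : ℝ}
    (hL : L ∈ Ioo 0 1) {ρS ρT : ℝ} (hρS : ρS = (L * μ.real S + μ.real Sᶜ)⁻¹)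
    (hρT : ρT = (L * μ.real T + μ.real Tᶜ)⁻¹) :
    log (∫ x, (if x ∈ S then ρS * L else ρS) ^ 2 / (if x ∈ T then ρT * L else ρT) ∂μ) ≤
      L⁻¹ ^ 2 * μ.real (symmDiff T S) := by
  have hL0 : L ≠ 0 := hL.1.ne'
  have hratio : ∀ x, (if x ∈ S then ρS * L else ρS) ^ 2 / (if x ∈ T then ρT * L else ρT) =
      ρS ^ 2 / ρT *
        (if x ∈ S then (if x ∈ T then L else L ^ 2) else (if x ∈ T then L⁻¹ else 1)) := by
    intro x
    split_ifs <;> field_simp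
  have hSμ : μ.real S = μ.real (S ∩ T) + μ.real (S ∩ Tᶜ) :=
    (measureReal_inter_add_sdiff hT).symm
  have hScμ : μ.real Sᶜ = μ.real (Sᶜ ∩ T) + μ.real (Sᶜ ∩ Tᶜ) :=
    (measureReal_inter_add_sdiff hT).symm
  have hTμ : μ.real T = μ.real (S ∩ T) + μ.real (Sᶜ ∩ T) := by
    rw [inter_comm S, inter_comm Sᶜ]; exact (measureReal_inter_add_sdiff hS).symm
  have hTcμ : μ.real Tᶜ = μ.real (S ∩ Tᶜ) + μ.real (Sᶜ ∩ Tᶜ) := by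
    rw [inter_comm S, inter_comm Sᶜ]; exact (measureReal_inter_add_sdiff hS).symm
  have hΔμ : μ.real (symmDiff T S) = μ.real (Sᶜ ∩ T) + μ.real (S ∩ Tᶜ) := by
    rw [measureReal_symmDiff_eq hT hS, inter_comm Sᶜ]; rfl
  have htotal : μ.real (S ∩ T) + μ.real (S ∩ Tᶜ) + μ.real (Sᶜ ∩ T) + μ.real (Sᶜ ∩ Tᶜ) = 1 := by
    rw [add_assoc, ← hScμ, ← hSμ, measureReal_add_measureReal_compl hS, probReal_univ]
  rw [funext hratio, integral_const_mul, integral_ite_mem_ite_mem hS hT, hρS, hρT, hSμ, hScμ,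
    hTμ, hTcμ, hΔμ, mul_one]
  exact log_two_valued_ratio_le hL measureReal_nonneg measureReal_nonneg measureReal_nonneg
    measureReal_nonneg htotal

end

open MeasureTheory Classical in
theorem stmt_14_general {G : Type*} [Group G] {X₀ : Type*} [MeasurableSpace X₀]
    (L : ℝ) (hL : L ∈ Set.Ioo (0 : ℝ) 1)
    (μ₀ : Measure X₀) [IsProbabilityMeasure μ₀]
    (A : G → Set X₀) (hA : ∀ g, MeasurableSet (A g))
    (ρ : G → ℝ)
    (hρ : ∀ g, ρ g = (L * (μ₀ (A g)).toReal + (μ₀ ((A g)ᶜ)).toReal)⁻¹)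
    (f : G → X₀ → ℝ)
    (hf : ∀ g x, f g x = if x ∈ A g then ρ g * L else ρ g) :
    ∀ g h : G,
      Real.log (∫ x, (f h x) ^ 2 / f (g * h) x ∂μ₀) ≤
        (L⁻¹) ^ 2 * (μ₀ (symmDiff (A (g * h)) (A h))).toReal := by
  intro g h
  simp only [hf]
  exact log_integral_sq_div_two_valued_le (hA h) (hA (g * h)) hL (hρ h) (hρ (g * h))

open MeasureTheory Classical in
theorem stmt_14 {G : Type*} [Group G] [Countable G] {X₀ : Type*} [MeasurableSpace X₀]
    (F : G → ℝ) (C : ℝ) (hFbd : ∀ g, |F g| ≤ C)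
    (L : ℝ) (hL : L ∈ Set.Ioo (0 : ℝ) 1)
    (μ₀ : Measure X₀) [IsProbabilityMeasure μ₀]
    (A : G → Set X₀) (hA : ∀ g, MeasurableSet (A g))
    (ρ : G → ℝ)
    (hρ : ∀ g, ρ g = (L * (μ₀ (A g)).toReal + (μ₀ ((A g)ᶜ)).toReal)⁻¹)
    (f : G → X₀ → ℝ)
    (hf : ∀ g x, f g x = if x ∈ A g then ρ g * L else ρ g) :
    ∀ g h : G,
      Real.log (∫ x, (f h x) ^ 2 / f (g * h) x ∂μ₀) ≤
        (L⁻¹) ^ 2 * (μ₀ (symmDiff (A (g * h)) (A h))).toReal :=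
  stmt_14_general L hL μ₀ A hA ρ hρ f hf
end

section
/- Let G = ℤ * (ℤ/aℤ) for an integer a ≥ 2. For a reduced word g = a₀ n₁ a₁ ⋯ n_k a_k with a_i ∈ ℤ/aℤ and n_i ∈ ℤ nonzero, set |g| = |n₁| + ⋯ + |n_k|, with |g| = 0 when g ∈ ℤ/aℤ. Then for every m ≥ 1: |{g ∈ G : |g| ≤ m}| = (a/(a-1)) (a (2a-1)^m - 1). Consequently lim sup_{s→∞} (log |{g : |g| ≤ s}|)/s = log(2a-1). -/
/-- The family of the two factors of the free product `ℤ * (ℤ/aℤ)`, written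
multiplicatively and indexed by `Bool`: `true` corresponds to `ℤ`, `false` to `ℤ/aℤ`. -/
def freeProdFam (a : ℕ) : Bool → Type
  | true => Multiplicative ℤ
  | false => Multiplicative (ZMod a)

instance (a : ℕ) : ∀ b, Group (freeProdFam a b)
  | true => inferInstanceAs (Group (Multiplicative ℤ))
  | false => inferInstanceAs (Group (Multiplicative (ZMod a)))

instance (a : ℕ) : ∀ b, DecidableEq (freeProdFam a b)
  | true => inferInstanceAs (DecidableEq (Multiplicative ℤ))
  | false => inferInstanceAs (DecidableEq (Multiplicative (ZMod a)))

/-- The contribution of one letter of a reduced word to the length `|g|`: the absolute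
value of the letter if it lies in the factor `ℤ`, and `0` if it lies in `ℤ/aℤ`. -/
def letterVal (a : ℕ) : (Σ b, freeProdFam a b) → ℕ
  | ⟨true, m⟩ => (Multiplicative.toAdd m).natAbs
  | ⟨false, _⟩ => 0

/-- The length `|g|` of an element of `ℤ * (ℤ/aℤ)`: the sum of the absolute values of the
`ℤ`-letters of the unique reduced word representing `g`. -/
def wordLen (a : ℕ) (g : Monoid.CoprodI (freeProdFam a)) : ℕ :=
  (((Monoid.CoprodI.Word.equiv g).toList).map (letterVal a)).sum

/-! Count reduced words by their first letter. Let `x n` and `y n` be the numbers of reduced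
words of length at most `n` beginning with a letter of `ℤ`, resp. of `ℤ/aℤ`. Removing the
first letter gives `y n = (a - 1) * (1 + x n)`. A word beginning with `k ∈ ℤ`, `|k| ≥ 2`,
arises from one beginning with `k - sign k` of length one less, and a word beginning with `±1`
is `±1` followed by a word of length at most `n` not beginning in `ℤ`; hence
`x (n + 1) = x n + 2 * (1 + y n)`. Solving, `(a - 1) * (1 + x n) + 1 = a * (2a - 1) ^ n`, and
the ball of radius `n` has `a * (1 + x n)` elements. This is `(2a - 1) ^ n` up to bounded
factors, which gives the growth rate. -/

namespace Monoid.CoprodI.Word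

section

variable {ι : Type*} {M : ι → Type*} [∀ i, Monoid (M i)]

def weight (ℓ : (Σ i, M i) → ℕ) (w : Word M) : ℕ :=
  (w.toList.map ℓ).sum

@[simp]
theorem weight_empty (ℓ : (Σ i, M i) → ℕ) : weight ℓ (empty : Word M) = 0 := rfl

@[simp]
theorem weight_cons (ℓ : (Σ i, M i) → ℕ) {i : ι} (m : M i) (w : Word M)
    (hmw : w.fstIdx ≠ some i) (h1 : m ≠ 1) :
    weight ℓ (cons m w hmw h1) = ℓ ⟨i, m⟩ + weight ℓ w := by
  simp [weight]

theorem fstIdx_eq_none_iff {w : Word M} : w.fstIdx = none ↔ w = empty := by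
  rcases w with ⟨_ | _, _, _⟩ <;> simp [fstIdx, empty]

variable [DecidableEq ι] [∀ i, DecidableEq (M i)]

theorem encard_fstIdx_eq_some_weight_le (ℓ : (Σ i, M i) → ℕ) (i : ι) (n : ℕ) :
    {w : Word M | w.fstIdx = some i ∧ weight ℓ w ≤ n}.encard =
      {p : M i × Word M | p.1 ≠ 1 ∧ p.2.fstIdx ≠ some i ∧
        ℓ ⟨i, p.1⟩ + weight ℓ p.2 ≤ n}.encard := by
  set S := {p : M i × Word M |
    p.1 ≠ 1 ∧ p.2.fstIdx ≠ some i ∧ ℓ ⟨i, p.1⟩ + weight ℓ p.2 ≤ n}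
  have hcons : ∀ p ∈ S, ∃ h1 h2, of p.1 • p.2 = cons p.1 p.2 h1 h2 :=
    fun p hp => ⟨hp.2.1, hp.1, cons_eq_smul.symm⟩
  have hinj : Set.InjOn (fun p : M i × Word M => of p.1 • p.2) S := by
    intro p hp q hq hpq
    obtain ⟨_, _, hp'⟩ := hcons p hp
    obtain ⟨_, _, hq'⟩ := hcons q hq
    simp only [hp', hq'] at hpq
    have := congrArg toList hpq
    simp only [cons_toList, List.cons.injEq, Sigma.mk.injEq, heq_eq_eq, true_and] at this
    exact Prod.ext this.1 (Word.ext this.2)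
  rw [← hinj.encard_image]
  congr 1
  ext w
  constructor
  · rintro ⟨hi, hn⟩
    set p := equivPair i w
    have hw : of p.head • p.tail = w := equivPair_head_smul_equivPair_tail w
    have hne : p.head ≠ 1 := by
      intro h
      rw [h, map_one, one_smul] at hw
      exact p.fstIdx_ne (hw ▸ hi)
    rw [← cons_eq_smul (h1 := p.fstIdx_ne) (h2 := hne)] at hw
    refine ⟨(p.head, p.tail), ⟨hne, p.fstIdx_ne, ?_⟩, ?_⟩
    · rwa [← hw, weight_cons] at hn
    · rw [← hw, cons_eq_smul]
  · rintro ⟨p, hp, rfl⟩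
    obtain ⟨_, _, hp'⟩ := hcons p hp
    simp only [hp', fstIdx_cons, weight_cons, Set.mem_ofPred_eq, true_and]
    exact hp.2.2

end

theorem encard_fstIdx_ne_some {M : Bool → Type*} [∀ i, Monoid (M i)]
    {i j : Bool} (hij : i ≠ j) (P : Word M → Prop) :
    {w : Word M | w.fstIdx ≠ some i ∧ P w}.encard =
      {w : Word M | w.fstIdx = none ∧ P w}.encard +
        {w : Word M | w.fstIdx = some j ∧ P w}.encard := by
  rw [← Set.encard_union_eq]
  · congr 1
    ext w
    cases h : w.fstIdx with
    | none => simp [h]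
    | some k => revert hij; cases i <;> cases j <;> cases k <;> simp [h]
  · rw [Set.disjoint_left]
    rintro w ⟨h, -⟩ ⟨h', -⟩
    simp [h] at h'

end Monoid.CoprodI.Word

theorem Int.add_sign_injective : Function.Injective fun k : ℤ => k + k.sign := by
  intro j k h
  simp only at h
  rcases lt_trichotomy j 0 with hj | rfl | hj <;> rcases lt_trichotomy k 0 with hk | rfl | hk <;>
    simp [Int.sign_eq_neg_one_of_neg, Int.sign_eq_one_of_pos, *] at h <;> omega

theorem Int.natAbs_add_sign {k : ℤ} (hk : k ≠ 0) : (k + k.sign).natAbs = k.natAbs + 1 := by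
  rcases hk.lt_or_gt with hk | hk <;>
    simp [Int.sign_eq_neg_one_of_neg, Int.sign_eq_one_of_pos, hk] <;> omega

theorem Int.exists_add_sign_eq {k : ℤ} (hk : 2 ≤ k.natAbs) : ∃ j ≠ 0, j + j.sign = k := by
  rcases lt_trichotomy k 0 with hk' | rfl | hk'
  · exact ⟨k + 1, by omega, by rw [Int.sign_eq_neg_one_of_neg (by omega)]; omega⟩
  · simp at hk
  · exact ⟨k - 1, by omega, by rw [Int.sign_eq_one_of_pos (by omega)]; omega⟩

theorem encard_int_prod_natAbs_add_le_succ {X : Type*} (s : Set X) (ν : X → ℕ) (n : ℕ) :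
    {p : ℤ × X | p.1 ≠ 0 ∧ p.2 ∈ s ∧ p.1.natAbs + ν p.2 ≤ n + 1}.encard =
      2 * {x ∈ s | ν x ≤ n}.encard +
        {p : ℤ × X | p.1 ≠ 0 ∧ p.2 ∈ s ∧ p.1.natAbs + ν p.2 ≤ n}.encard := by
  -- Besides `k = ±1`, the level `n + 1` is the image of the level `n` under `k ↦ k + sign k`.
  set bump : ℤ × X → ℤ × X := Prod.map (fun k => k + k.sign) id
  have hsplit : {p : ℤ × X | p.1 ≠ 0 ∧ p.2 ∈ s ∧ p.1.natAbs + ν p.2 ≤ n + 1} =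
      ({1, -1} ×ˢ {x ∈ s | ν x ≤ n}) ∪
        bump '' {p : ℤ × X | p.1 ≠ 0 ∧ p.2 ∈ s ∧ p.1.natAbs + ν p.2 ≤ n} := by
    ext ⟨k, x⟩
    simp only [Set.mem_union, Set.mem_prod, Set.mem_insert_iff, Set.mem_singleton_iff,
      Set.mem_image, Set.mem_ofPred_eq, Prod.exists, bump, Prod.map, id, Prod.mk.injEq]
    constructor
    · rintro ⟨hk, hx, hle⟩
      by_cases h1 : k.natAbs = 1
      · exact Or.inl ⟨by omega, hx, by omega⟩
      · obtain ⟨j, hj, rfl⟩ := Int.exists_add_sign_eq (by omega : 2 ≤ k.natAbs)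
        rw [Int.natAbs_add_sign hj] at hle
        exact Or.inr ⟨j, x, ⟨hj, hx, by omega⟩, rfl, rfl⟩
    · rintro (⟨hk, hx, hle⟩ | ⟨j, y, ⟨hj, hy, hle⟩, rfl, rfl⟩)
      · exact ⟨by omega, hx, by omega⟩
      · have := Int.natAbs_add_sign hj
        exact ⟨by omega, hy, by omega⟩
  have hdisj : Disjoint ({1, -1} ×ˢ {x ∈ s | ν x ≤ n})
      (bump '' {p : ℤ × X | p.1 ≠ 0 ∧ p.2 ∈ s ∧ p.1.natAbs + ν p.2 ≤ n}) := by
    rw [Set.disjoint_left]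
    rintro _ ⟨hk, -⟩ ⟨⟨j, y⟩, ⟨hj : j ≠ 0, -⟩, rfl⟩
    have := Int.natAbs_add_sign hj
    simp only [bump, Prod.map, Set.mem_insert_iff, Set.mem_singleton_iff] at hk
    omega
  rw [hsplit, Set.encard_union_eq hdisj, Set.encard_prod, Set.encard_pair (by decide),
    (Int.add_sign_injective.prodMap Function.injective_id).injOn.encard_image]

theorem Set.encard_setOf_ne {α : Type*} [Finite α] (x : α) :
    {y | y ≠ x}.encard = (Nat.card α - 1 : ℕ) := by
  rw [← compl_singleton_eq, compl_eq_univ_sdiff, encard_sdiff_singleton_of_mem (mem_univ x),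
    encard_univ, ENat.card_eq_coe_natCard, ENat.natCast_sub, Nat.cast_one]

open Monoid.CoprodI Monoid.CoprodI.Word

section Count

variable (a : ℕ)

def wordBall (n : ℕ) (o : Option Bool) : Set (Word (freeProdFam a)) :=
  {w | w.fstIdx = o ∧ weight (letterVal a) w ≤ n}

theorem encard_wordBall_none (n : ℕ) : (wordBall a n none).encard = 1 := by
  convert Set.encard_singleton (empty : Word (freeProdFam a))
  ext w
  simp only [wordBall, fstIdx_eq_none_iff, Set.mem_ofPred_eq, Set.mem_singleton_iff,
    and_iff_left_iff_imp]
  rintro rfl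
  simp

theorem encard_fstIdx_ne_some_weight_le {i j : Bool} (hij : i ≠ j) (n : ℕ) :
    {w : Word (freeProdFam a) | w.fstIdx ≠ some i ∧ weight (letterVal a) w ≤ n}.encard =
      1 + (wordBall a n (some j)).encard := by
  rw [encard_fstIdx_ne_some hij, ← encard_wordBall_none a n]
  rfl

theorem encard_weight_le (n : ℕ) :
    {w : Word (freeProdFam a) | weight (letterVal a) w ≤ n}.encard =
      1 + (wordBall a n (some true)).encard + (wordBall a n (some false)).encard := by
  rw [← encard_fstIdx_ne_some_weight_le a Bool.false_ne_true, ← Set.encard_union_eq]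
  · congr 1
    ext w
    simp only [wordBall, Set.mem_union, Set.mem_ofPred_eq]
    tauto
  · rw [Set.disjoint_left]
    rintro w ⟨h, -⟩ ⟨h', -⟩
    exact h h'

theorem encard_wordBall_false [NeZero a] (n : ℕ) :
    (wordBall a n (some false)).encard =
      (a - 1 : ℕ) * (1 + (wordBall a n (some true)).encard) := by
  rw [wordBall, encard_fstIdx_eq_some_weight_le,
    ← encard_fstIdx_ne_some_weight_le a Bool.false_ne_true]
  have hprod : {p : freeProdFam a false × Word (freeProdFam a) | p.1 ≠ 1 ∧
      p.2.fstIdx ≠ some false ∧ letterVal a ⟨false, p.1⟩ + weight (letterVal a) p.2 ≤ n} =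
      {c | c ≠ 1} ×ˢ {w | w.fstIdx ≠ some false ∧ weight (letterVal a) w ≤ n} := by
    ext
    simp [letterVal]
  have : Finite (freeProdFam a false) := inferInstanceAs (Finite (Multiplicative (ZMod a)))
  have hcard : Nat.card (freeProdFam a false) = a :=
    (Nat.card_congr (Multiplicative.toAdd : Multiplicative (ZMod a) ≃ ZMod a)).trans
      (Nat.card_zmod a)
  rw [hprod, Set.encard_prod, Set.encard_setOf_ne, hcard]

-- The letters of the `ℤ` factor are definitionally integers, with `1` being `0`.
theorem encard_wordBall_true (n : ℕ) :
    (wordBall a n (some true)).encard =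
      {p : ℤ × Word (freeProdFam a) | p.1 ≠ 0 ∧ p.2 ∈ {w | w.fstIdx ≠ some true} ∧
        p.1.natAbs + weight (letterVal a) p.2 ≤ n}.encard := by
  rw [wordBall, encard_fstIdx_eq_some_weight_le]
  rfl

theorem encard_wordBall_true_zero : (wordBall a 0 (some true)).encard = 0 := by
  rw [encard_wordBall_true, Set.encard_eq_zero, Set.eq_empty_iff_forall_notMem]
  rintro ⟨k, w⟩ ⟨hk, -, hle⟩
  omega

theorem encard_wordBall_true_succ (n : ℕ) :
    (wordBall a (n + 1) (some true)).encard =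
      2 * (1 + (wordBall a n (some false)).encard) + (wordBall a n (some true)).encard := by
  rw [encard_wordBall_true, encard_int_prod_natAbs_add_le_succ, ← encard_wordBall_true,
    ← encard_fstIdx_ne_some_weight_le a (by decide : true ≠ false)]
  rfl

theorem sub_one_mul_one_add_encard_wordBall_true_add_one [NeZero a] (n : ℕ) :
    ((a - 1 : ℕ) : ℕ∞) * (1 + (wordBall a n (some true)).encard) + 1 =
      a * ((2 * a - 1 : ℕ) : ℕ∞) ^ n := by
  obtain ⟨q, rfl⟩ : ∃ q, a = q + 1 := ⟨a - 1, (Nat.sub_add_cancel NeZero.one_le).symm⟩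
  rw [Nat.add_sub_cancel, show 2 * (q + 1) - 1 = 2 * q + 1 by omega]
  push_cast
  induction n with
  | zero => simp [encard_wordBall_true_zero]
  | succ n ih =>
    rw [encard_wordBall_true_succ, encard_wordBall_false]
    set x := (wordBall (q + 1) n (some true)).encard
    calc (q : ℕ∞) * (1 + (2 * (1 + q * (1 + x)) + x)) + 1
        = (2 * q + 1) * (q * (1 + x) + 1) := by ring
      _ = (q + 1) * (2 * q + 1) ^ (n + 1) := by rw [ih]; ring

theorem sub_one_mul_card_wordLen_le_add_self (ha : 1 < a) (n : ℕ) :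
    (a - 1) * Nat.card {g : Monoid.CoprodI (freeProdFam a) // wordLen a g ≤ n} + a =
      a ^ 2 * (2 * a - 1) ^ n := by
  have : NeZero a := ⟨by omega⟩
  have hclosed := sub_one_mul_one_add_encard_wordBall_true_add_one a n
  obtain ⟨k, hk⟩ := ENat.ne_top_iff_exists.mp
      fun htop : 1 + (wordBall a n (some true)).encard = ⊤ => by
    rw [htop, ENat.mul_top (by exact_mod_cast (by omega : a - 1 ≠ 0))] at hclosed
    exact ENat.top_ne_natCast _ (by exact_mod_cast hclosed)
  rw [← hk] at hclosed
  have hk' : (a - 1) * k + 1 = a * (2 * a - 1) ^ n := by exact_mod_cast hclosed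
  have hN : Nat.card {g : Monoid.CoprodI (freeProdFam a) // wordLen a g ≤ n} =
      k + (a - 1) * k := by
    have e : {g : Monoid.CoprodI (freeProdFam a) // wordLen a g ≤ n} ≃
        {w : Word (freeProdFam a) | weight (letterVal a) w ≤ n} :=
      Word.equiv.subtypeEquiv fun _ => Iff.rfl
    rw [Nat.card_congr e, Nat.card_coe_set_eq, Set.ncard_def, encard_weight_le,
      encard_wordBall_false, ← hk]
    norm_cast
  obtain ⟨q, rfl⟩ : ∃ q, a = q + 1 := ⟨a - 1, by omega⟩
  rw [hN, pow_two, mul_assoc, ← hk']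
  simp only [Nat.add_sub_cancel]
  ring

theorem card_wordLen_le_eq (ha : 1 < a) (n : ℕ) :
    (Nat.card {g : Monoid.CoprodI (freeProdFam a) // wordLen a g ≤ n} : ℝ) =
      (a / (a - 1)) * (a * (2 * a - 1) ^ n - 1) := by
  have ha' : (1 : ℝ) < a := by exact_mod_cast ha
  have h := congrArg (Nat.cast : ℕ → ℝ) (sub_one_mul_card_wordLen_le_add_self a ha n)
  push_cast [Nat.cast_sub (by omega : 1 ≤ a), Nat.cast_sub (by omega : 1 ≤ 2 * a)] at h
  rw [div_mul_eq_mul_div, eq_div_iff (by linarith)]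
  linear_combination h

theorem log_card_wordLen_le_mem_Icc (ha : 1 < a) (n : ℕ) :
    Real.log (Nat.card {g : Monoid.CoprodI (freeProdFam a) // wordLen a g ≤ n}) ∈
      Set.Icc (n * Real.log (2 * a - 1)) ((n + 2) * Real.log (2 * a - 1)) := by
  have hA : (2 : ℝ) ≤ a := by exact_mod_cast ha
  have hN := card_wordLen_le_eq a ha n
  set N := Nat.card {g : Monoid.CoprodI (freeProdFam a) // wordLen a g ≤ n}
  set X : ℝ := (2 * a - 1) ^ n
  have hX : 1 ≤ X := one_le_pow₀ (by linarith)
  have hlower : X ≤ N := by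
    rw [hN, div_mul_eq_mul_div, le_div_iff₀ (by linarith)]
    nlinarith [mul_nonneg (sub_nonneg.mpr hX) (by nlinarith : (0 : ℝ) ≤ a ^ 2 - a + 1)]
  have hupper : (N : ℝ) ≤ (2 * a - 1) ^ 2 * X := by
    rw [hN, div_mul_eq_mul_div, div_le_iff₀ (by linarith)]
    nlinarith [mul_nonneg (mul_nonneg (by linarith : (0 : ℝ) ≤ a - 2)
      (by linarith : (0 : ℝ) ≤ a)) (by linarith : (0 : ℝ) ≤ 4 * a - 1)]
  have hXpos : 0 < X := by linarith
  constructor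
  · calc (n : ℝ) * Real.log (2 * a - 1) = Real.log X := by rw [Real.log_pow]
      _ ≤ _ := Real.log_le_log hXpos hlower
  · calc _ ≤ Real.log ((2 * a - 1) ^ 2 * X) := Real.log_le_log (hXpos.trans_le hlower) hupper
      _ = _ := by
        rw [Real.log_mul (pow_pos (by linarith) 2).ne' hXpos.ne', Real.log_pow, Real.log_pow]
        push_cast
        ring

end Count

open Filter Topology in
theorem tendsto_div_self_of_abs_sub_mul_le {g : ℝ → ℝ} {L C : ℝ}
    (h : ∀ᶠ s in atTop, |g s - s * L| ≤ C) : Tendsto (fun s => g s / s) atTop (𝓝 L) := by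
  have herr : Tendsto (fun s => (g s - s * L) / s) atTop (𝓝 0) := by
    refine squeeze_zero_norm' ?_ (by simpa using (tendsto_inv_atTop_zero (𝕜 := ℝ)).const_mul C)
    filter_upwards [h, eventually_gt_atTop 0] with s hs hs0
    rw [Real.norm_eq_abs, abs_div, abs_of_pos hs0, div_eq_mul_inv]
    exact mul_le_mul_of_nonneg_right hs (inv_nonneg.mpr hs0.le)
  refine (by simpa using herr.const_add L : Tendsto _ _ _).congr' ?_
  filter_upwards [eventually_gt_atTop 0] with s hs0
  field_simp
  ring

theorem stmt_15 (a : ℕ) (ha : 2 ≤ a) :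
    (∀ m : ℕ, 1 ≤ m →
      (Nat.card {g : Monoid.CoprodI (freeProdFam a) // wordLen a g ≤ m} : ℝ) =
        ((a : ℝ) / ((a : ℝ) - 1)) * ((a : ℝ) * (2 * (a : ℝ) - 1) ^ m - 1)) ∧
    Filter.limsup (fun s : ℝ =>
        Real.log (Nat.card {g : Monoid.CoprodI (freeProdFam a) // (wordLen a g : ℝ) ≤ s}) / s)
      Filter.atTop = Real.log (2 * (a : ℝ) - 1) := by
  refine ⟨fun m _ => card_wordLen_le_eq a ha m, ?_⟩
  have hA : (2 : ℝ) ≤ a := by exact_mod_cast ha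
  have hL : 0 < Real.log (2 * (a : ℝ) - 1) := Real.log_pos (by linarith)
  refine (tendsto_div_self_of_abs_sub_mul_le (C := 2 * Real.log (2 * (a : ℝ) - 1)) ?_).limsup_eq
  filter_upwards [Filter.eventually_ge_atTop 0] with s hs
  rw [Nat.card_congr (Equiv.subtypeEquivRight fun g => (Nat.le_floor_iff hs).symm)]
  obtain ⟨hlo, hhi⟩ := log_card_wordLen_le_mem_Icc a ha ⌊s⌋₊
  have := Nat.floor_le hs
  have := Nat.lt_floor_add_one s
  rw [abs_le]
  constructor <;> nlinarith
end

section
/- Define b₁ = 1 and inductively b_n ≥ exp(n³ ∑_{k=1}^{n-1} b_k) for n ≥ 2; set a₀ = 0 and a_n = ∑_{k=1}^{n} b_k. Define F : ℤ → [0,∞) by F(n) = k + j/b_k whenever |n| = a_{k-1} + j with k ∈ ℕ and 0 ≤ j ≤ b_k. Then the cocycle c_N(n) = F(n - N) - F(n) belongs to ℓ²(ℤ) for every N ∈ ℤ, and lim sup_{s→∞} (log |{N ∈ ℤ : ‖c_N‖₂² ≤ s}|)/s = +∞. -/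
/-!
On `ℕ` the profile `m ↦ F m` is nondecreasing and concave, with slope `1 / b (k + 1)` on the block
`[a k, a (k + 1))`, and `F n = F |n|`. For `r ≤ R ≤ r + |N|` concavity bounds `F R - F r` by
`|N|` times the slope at `r`, and for `r < a k` we simply use `F R - F r ≤ k + 1`. Since
`n ↦ min |n| |n - N|` is at most four-to-one, this gives
`‖c_N‖₂² ≤ 4 (a k (k + 1)² + |N|² ∑_{m ≥ a k} slope m ^ 2)`, and the tail sum is at most
`2 / b (k + 1)` because `b` at least doubles. So whenever `|N|² ≤ b (k + 1)` we get
`‖c_N‖₂² ≤ s_k := 4 (a k (k + 1)² + 2)`: the sublevel set at `s_k` has at least `√(b (k + 1))`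
elements, whose logarithm is at least `(k + 1)³ a k / 2`, about `k / 8` times `s_k`.
-/

open Filter Finset

namespace PiecewiseLinearCocycle

section ConcaveProfile

variable {f : ℕ → ℝ}

theorem sub_le_mul_increment (hd : Antitone fun m => f (m + 1) - f m) {r R : ℕ} (h : r ≤ R) :
    f R - f r ≤ (R - r : ℕ) * (f (r + 1) - f r) := by
  induction R, h using Nat.le_induction with
  | base => simp
  | succ R hR ih =>
    have := hd hR
    rw [Nat.sub_add_comm hR, Nat.cast_succ]
    linarith

/-- Bound for `(f R - f r) ^ 2` when `r ≤ R ≤ r + M`: below the threshold `A` we only use the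
oscillation of `f` on `[0, A + M]`, above it the concavity of `f`. -/
def majorant (f : ℕ → ℝ) (A M r : ℕ) : ℝ :=
  if r < A then (f (A + M) - f 0) ^ 2 else M ^ 2 * (f (r + 1) - f r) ^ 2

theorem majorant_nonneg (A M r : ℕ) : 0 ≤ majorant f A M r := by
  unfold majorant; split_ifs <;> positivity

theorem sq_sub_le_majorant (hf : Monotone f) (hd : Antitone fun m => f (m + 1) - f m)
    (A : ℕ) {M r R : ℕ} (h₁ : r ≤ R) (h₂ : R ≤ r + M) :
    (f R - f r) ^ 2 ≤ majorant f A M r := by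
  have h₀ : 0 ≤ f R - f r := sub_nonneg.2 (hf h₁)
  unfold majorant
  split_ifs with hr
  · have : f R - f r ≤ f (A + M) - f 0 := sub_le_sub (hf (by omega)) (hf r.zero_le)
    exact pow_le_pow_left₀ h₀ this 2
  · have hinc : 0 ≤ f (r + 1) - f r := sub_nonneg.2 (hf r.le_succ)
    have : f R - f r ≤ M * (f (r + 1) - f r) :=
      (sub_le_mul_increment hd h₁).trans
        (mul_le_mul_of_nonneg_right (by exact_mod_cast (by omega : R - r ≤ M)) hinc)
    calc (f R - f r) ^ 2 ≤ (M * (f (r + 1) - f r)) ^ 2 := pow_le_pow_left₀ h₀ this 2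
      _ = M ^ 2 * (f (r + 1) - f r) ^ 2 := by ring

theorem sq_sub_natAbs_le (hf : Monotone f) (hd : Antitone fun m => f (m + 1) - f m)
    (A : ℕ) (N n : ℤ) :
    (f (n - N).natAbs - f n.natAbs) ^ 2 ≤
      majorant f A N.natAbs n.natAbs + majorant f A N.natAbs (n - N).natAbs := by
  have h₁ : (n - N).natAbs ≤ n.natAbs + N.natAbs := Int.natAbs_sub_le n N
  have h₂ : n.natAbs ≤ (n - N).natAbs + N.natAbs := by
    simpa using Int.natAbs_add_le (n - N) N
  rcases le_total (n - N).natAbs n.natAbs with h | h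
  · have := sq_sub_le_majorant hf hd A h h₂
    rw [← neg_sub, neg_sq]
    linarith [majorant_nonneg (f := f) A N.natAbs n.natAbs]
  · have := sq_sub_le_majorant hf hd A h h₁
    linarith [majorant_nonneg (f := f) A N.natAbs (n - N).natAbs]

theorem sum_majorant_le {A : ℕ} {T : ℝ}
    (hT : ∀ v : Finset ℕ, (∀ m ∈ v, A ≤ m) → ∑ m ∈ v, (f (m + 1) - f m) ^ 2 ≤ T)
    (M : ℕ) (v : Finset ℕ) :
    ∑ m ∈ v, majorant f A M m ≤ A * (f (A + M) - f 0) ^ 2 + M ^ 2 * T := by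
  unfold majorant
  rw [sum_ite, sum_const, nsmul_eq_mul, ← mul_sum]
  gcongr
  · have : v.filter (· < A) ⊆ range A := fun m hm => mem_range.2 (mem_filter.1 hm).2
    exact_mod_cast (card_le_card this).trans (card_range A).le
  · exact hT _ fun m hm => not_lt.1 (mem_filter.1 hm).2

theorem sum_comp_natAbs_sub_le {h : ℕ → ℝ} {B : ℝ} (hB : ∀ v : Finset ℕ, ∑ m ∈ v, h m ≤ B)
    (c : ℤ) (u : Finset ℤ) :
    ∑ n ∈ u, h (n - c).natAbs ≤ 2 * B := by
  have hinj : ∀ w : Finset ℤ, Set.InjOn (fun n => (n - c).natAbs) w →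
      ∑ n ∈ w, h (n - c).natAbs ≤ B := fun w hw => by
    rw [← sum_image hw]; exact hB _
  rw [← sum_filter_add_sum_filter_not u (fun n => 0 ≤ n - c), two_mul]
  gcongr <;> refine hinj _ fun x hx y hy hxy => ?_
  · simp only [coe_filter, Set.mem_ofPred_eq] at hx hy hxy; omega
  · simp only [coe_filter, Set.mem_ofPred_eq] at hx hy hxy; omega

theorem sum_sq_sub_natAbs_le (hf : Monotone f) (hd : Antitone fun m => f (m + 1) - f m)
    {A : ℕ} {T : ℝ}
    (hT : ∀ v : Finset ℕ, (∀ m ∈ v, A ≤ m) → ∑ m ∈ v, (f (m + 1) - f m) ^ 2 ≤ T)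
    (N : ℤ) (u : Finset ℤ) :
    ∑ n ∈ u, (f (n - N).natAbs - f n.natAbs) ^ 2 ≤
      4 * (A * (f (A + N.natAbs) - f 0) ^ 2 + N.natAbs ^ 2 * T) := by
  have hB := sum_majorant_le hT N.natAbs
  calc ∑ n ∈ u, (f (n - N).natAbs - f n.natAbs) ^ 2
      ≤ ∑ n ∈ u, majorant f A N.natAbs (n - 0).natAbs +
          ∑ n ∈ u, majorant f A N.natAbs (n - N).natAbs := by
        rw [← sum_add_distrib]
        exact sum_le_sum fun n _ => by simpa using sq_sub_natAbs_le hf hd A N n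
    _ ≤ 4 * (A * (f (A + N.natAbs) - f 0) ^ 2 + N.natAbs ^ 2 * T) := by
        linarith [sum_comp_natAbs_sub_le hB 0 u, sum_comp_natAbs_sub_le hB N u]

end ConcaveProfile

theorem tendsto_natAbs_cofinite : Tendsto Int.natAbs cofinite atTop := by
  rw [← Nat.cofinite_eq_atTop]
  refine Tendsto.cofinite_of_finite_preimage_singleton fun m => ?_
  exact (Set.finite_Icc (-m : ℤ) m).subset fun n hn => by
    simp only [Set.mem_preimage, Set.mem_singleton_iff] at hn
    simp only [Set.mem_Icc]; omega

theorem log_le_two_mul_log_sqrt_add_two {n : ℕ} (hn : 0 < n) :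
    Real.log n ≤ 2 * Real.log (Nat.sqrt n) + 2 := by
  have hs : (1 : ℝ) ≤ Nat.sqrt n := by exact_mod_cast Nat.sqrt_pos.2 hn
  have hlt : (n : ℝ) < (Nat.sqrt n + 1) ^ 2 := by exact_mod_cast Nat.lt_succ_sqrt' n
  have h4 : (n : ℝ) ≤ 4 * Nat.sqrt n ^ 2 := by nlinarith
  calc Real.log n ≤ Real.log (4 * Nat.sqrt n ^ 2) := Real.log_le_log (by exact_mod_cast hn) h4
    _ = 2 * Real.log (Nat.sqrt n) + 2 * Real.log 2 := by
        rw [Real.log_mul (by norm_num) (by positivity), Real.log_pow,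
          show (4 : ℝ) = 2 ^ 2 by norm_num, Real.log_pow]
        push_cast; ring
    _ ≤ 2 * Real.log (Nat.sqrt n) + 2 := by linarith [Real.log_two_lt_d9]

theorem limsup_eq_top_of_tendsto {s : ℕ → ℝ} {φ : ℝ → ℝ} (hs : Tendsto s atTop atTop)
    (hφ : Tendsto (φ ∘ s) atTop atTop) : limsup (fun x => (φ x : EReal)) atTop = ⊤ := by
  refine (EReal.eq_top_iff_forall_lt _).2 fun y => ?_
  have : ∃ᶠ x in atTop, ((y + 1 : ℝ) : EReal) ≤ φ x :=
    hs.frequently ((hφ.eventually_ge_atTop (y + 1)).frequently.mono fun k hk =>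
      EReal.coe_le_coe_iff.2 hk)
  exact (EReal.coe_lt_coe_iff.2 (lt_add_one y)).trans_le (le_limsup_of_frequently_le' this)

structure Admissible (b a : ℕ → ℕ) : Prop where
  b_one : b 1 = 1
  exp_le_b : ∀ n : ℕ, 2 ≤ n →
    Real.exp ((n : ℝ) ^ 3 * ∑ k ∈ Finset.Icc 1 (n - 1), (b k : ℝ)) ≤ b n
  a_eq_sum : ∀ n, a n = ∑ k ∈ Finset.Icc 1 n, b k

namespace Admissible

variable {b a : ℕ → ℕ} (h : Admissible b a)
include h

theorem a_zero : a 0 = 0 := by simp [h.a_eq_sum 0]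

theorem a_succ (k : ℕ) : a (k + 1) = a k + b (k + 1) := by
  rw [h.a_eq_sum, h.a_eq_sum, sum_Icc_succ_top (by omega)]

theorem exp_le_b_succ {k : ℕ} (hk : 1 ≤ k) :
    Real.exp (((k : ℝ) + 1) ^ 3 * a k) ≤ b (k + 1) := by
  have := h.exp_le_b (k + 1) (by omega)
  simpa [h.a_eq_sum k] using this

theorem two_mul_a_le_b_succ (k : ℕ) : 2 * a k ≤ b (k + 1) := by
  rcases Nat.eq_zero_or_pos k with rfl | hk
  · simp [h.a_zero]
  have hcube : (2 : ℝ) ≤ ((k : ℝ) + 1) ^ 3 := by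
    have : (2 : ℝ) ≤ k + 1 := by norm_cast; omega
    exact this.trans (le_self_pow₀ (by linarith) (by norm_num))
  have : (2 : ℝ) * a k ≤ b (k + 1) :=
    calc (2 : ℝ) * a k ≤ ((k : ℝ) + 1) ^ 3 * a k + 1 := by nlinarith [(a k).cast_nonneg (α := ℝ)]
      _ ≤ Real.exp (((k : ℝ) + 1) ^ 3 * a k) := Real.add_one_le_exp _
      _ ≤ b (k + 1) := h.exp_le_b_succ hk
  exact_mod_cast this

theorem b_succ_pos (k : ℕ) : 0 < b (k + 1) := by
  induction k with
  | zero => simp [h.b_one]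
  | succ k ih => have := h.two_mul_a_le_b_succ (k + 1); have := h.a_succ k; omega

theorem two_mul_b_succ_le (k : ℕ) : 2 * b (k + 1) ≤ b (k + 2) := by
  have : 2 * a (k + 1) ≤ b (k + 2) := h.two_mul_a_le_b_succ (k + 1)
  have := h.a_succ k; omega

theorem monotone_b_succ : Monotone fun k => b (k + 1) :=
  monotone_nat_of_le_succ fun k => le_trans (by omega) (h.two_mul_b_succ_le k)

theorem strictMono_a : StrictMono a :=
  strictMono_nat_of_lt_succ fun k => by have := h.b_succ_pos k; have := h.a_succ k; omega

theorem self_le_a (k : ℕ) : k ≤ a k := h.strictMono_a.id_le k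

theorem exists_a_le_lt (m : ℕ) : ∃ k, a k ≤ m ∧ m < a (k + 1) := by
  classical
  have hex : ∃ k, m < a (k + 1) := ⟨m, (Nat.lt_succ_self m).trans_le (h.self_le_a _)⟩
  refine ⟨Nat.find hex, ?_, Nat.find_spec hex⟩
  rcases Nat.eq_zero_or_pos (Nat.find hex) with h0 | hpos
  · rw [h0, h.a_zero]; exact m.zero_le
  · have := Nat.find_min hex (m := Nat.find hex - 1) (by omega)
    rw [Nat.sub_add_cancel hpos] at this
    omega

theorem mul_a_le_log_b_succ {k : ℕ} (hk : 1 ≤ k) :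
    ((k : ℝ) + 1) ^ 3 * a k ≤ Real.log (b (k + 1)) :=
  (Real.le_log_iff_exp_le (by exact_mod_cast h.b_succ_pos k)).2 (h.exp_le_b_succ hk)

end Admissible

def IsProfile (b a : ℕ → ℕ) (F : ℤ → ℝ) : Prop :=
  ∀ (n : ℤ) (k j : ℕ), 1 ≤ k → j ≤ b k → n.natAbs = a (k - 1) + j →
    F n = (k : ℝ) + (j : ℝ) / (b k : ℝ)

namespace IsProfile

variable {b a : ℕ → ℕ} {F : ℤ → ℝ} (hF : IsProfile b a F)
include hF

theorem apply_natCast_a (k : ℕ) : F (a k) = k + 1 := by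
  rw [hF (a k) (k + 1) 0 (by omega) (by omega) (by simp)]
  push_cast; simp

variable (h : Admissible b a)
include h

theorem apply_eq_of_natAbs_mem {k m : ℕ} (h₁ : a k ≤ m) (h₂ : m ≤ a (k + 1)) {n : ℤ}
    (hn : n.natAbs = m) : F n = k + 1 + ((m - a k : ℕ) : ℝ) / b (k + 1) := by
  have := h.a_succ k
  rw [hF n (k + 1) (m - a k) (by omega) (by omega) (by simp only [Nat.add_sub_cancel]; omega)]
  push_cast; ring

theorem apply_eq_apply_natAbs (n : ℤ) : F n = F n.natAbs := by
  obtain ⟨k, h₁, h₂⟩ := h.exists_a_le_lt n.natAbs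
  rw [hF.apply_eq_of_natAbs_mem h h₁ h₂.le rfl,
    hF.apply_eq_of_natAbs_mem h h₁ h₂.le (Int.natAbs_natCast _)]

theorem apply_zero : F 0 = 1 := by
  simpa [h.a_zero] using hF.apply_natCast_a 0

theorem increment_eq {k m : ℕ} (h₁ : a k ≤ m) (h₂ : m < a (k + 1)) :
    F (m + 1 : ℕ) - F m = 1 / b (k + 1) := by
  have hb : (b (k + 1) : ℝ) ≠ 0 := by exact_mod_cast (h.b_succ_pos k).ne'
  rw [hF.apply_eq_of_natAbs_mem h h₁ h₂.le (Int.natAbs_natCast _),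
    hF.apply_eq_of_natAbs_mem h (k := k) (by omega) h₂ (Int.natAbs_natCast _),
    Nat.succ_sub h₁, Nat.cast_succ]
  field_simp
  ring

theorem increment_antitone : Antitone fun m : ℕ => F (m + 1 : ℕ) - F m := by
  intro m m' hm
  obtain ⟨k, h₁, h₂⟩ := h.exists_a_le_lt m
  obtain ⟨k', h₁', h₂'⟩ := h.exists_a_le_lt m'
  have hk : k ≤ k' := by
    by_contra! hk
    have := h.strictMono_a.monotone (show k' + 1 ≤ k by omega)
    omega
  simp only [hF.increment_eq h h₁ h₂, hF.increment_eq h h₁' h₂']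
  exact one_div_le_one_div_of_le (by exact_mod_cast h.b_succ_pos k)
    (by exact_mod_cast h.monotone_b_succ hk)

theorem monotone_natCast : Monotone fun m : ℕ => F m :=
  monotone_nat_of_le_succ fun m => by
    obtain ⟨k, h₁, h₂⟩ := h.exists_a_le_lt m
    have := hF.increment_eq h h₁ h₂
    have : (0 : ℝ) ≤ 1 / b (k + 1) := by positivity
    linarith

/-- Each block `[a L, a (L + 1))` contributes exactly `1 / b (L + 1)`, and `b` at least doubles. -/
theorem sum_sq_increment_Ico_add_le {K L : ℕ} (hKL : K ≤ L) :
    ∑ m ∈ Ico (a K) (a L), (F (m + 1 : ℕ) - F m) ^ 2 + 2 / b (L + 1) ≤ 2 / b (K + 1) := by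
  induction L, hKL using Nat.le_induction with
  | base => simp
  | succ L hKL ih =>
    have hmono := h.strictMono_a.monotone
    have hblock : ∑ m ∈ Ico (a L) (a (L + 1)), (F (m + 1 : ℕ) - F m) ^ 2 = 1 / b (L + 1) := by
      rw [sum_congr rfl fun m hm => by
        rw [hF.increment_eq h (mem_Ico.1 hm).1 (mem_Ico.1 hm).2], sum_const, Nat.card_Ico,
        h.a_succ, Nat.add_sub_cancel_left, nsmul_eq_mul]
      have hb : (b (L + 1) : ℝ) ≠ 0 := by exact_mod_cast (h.b_succ_pos L).ne'
      field_simp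
    have hdouble : 2 / (b (L + 1 + 1) : ℝ) ≤ 1 / b (L + 1) := by
      have hb : (0 : ℝ) < b (L + 1) := by exact_mod_cast h.b_succ_pos L
      have : (2 : ℝ) * b (L + 1) ≤ b (L + 1 + 1) := by exact_mod_cast h.two_mul_b_succ_le L
      rw [div_le_div_iff₀ (by linarith) hb]; linarith
    rw [← sum_Ico_consecutive _ (hmono (show K ≤ L by omega)) (hmono L.le_succ), hblock]
    have : 2 / (b (L + 1) : ℝ) = 1 / b (L + 1) + 1 / b (L + 1) := by ring
    linarith

theorem sum_sq_increment_le {K : ℕ} (v : Finset ℕ) (hv : ∀ m ∈ v, a K ≤ m) :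
    ∑ m ∈ v, (F (m + 1 : ℕ) - F m) ^ 2 ≤ 2 / b (K + 1) := by
  set L := K + v.sup id + 1
  have hsub : v ⊆ Ico (a K) (a L) := fun m hm => mem_Ico.2
    ⟨hv m hm, (le_sup (f := id) hm).trans_lt ((by omega : v.sup id < L).trans_le
      (h.self_le_a L))⟩
  have := hF.sum_sq_increment_Ico_add_le h (show K ≤ L by omega)
  have : (0 : ℝ) ≤ 2 / b (L + 1) := by positivity
  have := sum_le_sum_of_subset_of_nonneg hsub fun m _ _ => sq_nonneg (F (m + 1 : ℕ) - F m)
  linarith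

theorem sum_sq_sub_le {K : ℕ} {N : ℤ} (hN : N.natAbs ^ 2 ≤ b (K + 1)) (u : Finset ℤ) :
    ∑ n ∈ u, (F (n - N) - F n) ^ 2 ≤ 4 * (a K * ((K : ℝ) + 1) ^ 2 + 2) := by
  have hbound := sum_sq_sub_natAbs_le (f := fun m : ℕ => F m) (hF.monotone_natCast h)
    (hF.increment_antitone h) (fun v hv => hF.sum_sq_increment_le h (K := K) v hv) N u
  simp only [← hF.apply_eq_apply_natAbs h, Nat.cast_zero] at hbound
  refine hbound.trans ?_
  have hb : (0 : ℝ) < b (K + 1) := by exact_mod_cast h.b_succ_pos K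
  have hNb : (N.natAbs : ℝ) ^ 2 ≤ b (K + 1) := by exact_mod_cast hN
  have hF₀ : F 0 = 1 := hF.apply_zero h
  have hF₁ : 1 ≤ F (a K + N.natAbs : ℕ) := hF₀ ▸ hF.monotone_natCast h (Nat.zero_le _)
  have hF₂ : F (a K + N.natAbs : ℕ) ≤ K + 1 + 1 := by
    have : N.natAbs ≤ b (K + 1) := (Nat.le_self_pow two_ne_zero _).trans hN
    have := hF.monotone_natCast h (show a K + N.natAbs ≤ a (K + 1) by rw [h.a_succ]; omega)
    simpa [hF.apply_natCast_a] using this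
  have hosc : (F (a K + N.natAbs : ℕ) - F 0) ^ 2 ≤ ((K : ℝ) + 1) ^ 2 := by
    rw [hF₀]; exact pow_le_pow_left₀ (by linarith) (by linarith) 2
  have htail : (N.natAbs : ℝ) ^ 2 * (2 / b (K + 1)) ≤ 2 := by
    rw [mul_div_assoc', div_le_iff₀ hb]; nlinarith
  nlinarith [mul_le_mul_of_nonneg_left hosc (Nat.cast_nonneg (α := ℝ) (a K))]

theorem summable_sq_sub (N : ℤ) : Summable fun n => (F (n - N) - F n) ^ 2 := by
  have hN : N.natAbs ^ 2 ≤ b (N.natAbs ^ 2 + 1) := by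
    have := h.two_mul_a_le_b_succ (N.natAbs ^ 2)
    have := h.self_le_a (N.natAbs ^ 2)
    omega
  exact summable_of_sum_le (fun n => sq_nonneg _) (hF.sum_sq_sub_le h hN)

theorem tendsto_apply_cofinite : Tendsto F cofinite atTop := by
  have hnat : Tendsto (fun m : ℕ => F m) atTop atTop :=
    tendsto_atTop_atTop_of_monotone (hF.monotone_natCast h) fun y =>
      ⟨a ⌈y⌉₊, by rw [hF.apply_natCast_a]; linarith [Nat.le_ceil y]⟩
  convert hnat.comp tendsto_natAbs_cofinite using 1
  exact funext (hF.apply_eq_apply_natAbs h)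

theorem finite_setOf_tsum_sq_sub_le (s : ℝ) :
    {N : ℤ | ∑' n, (F (n - N) - F n) ^ 2 ≤ s}.Finite := by
  have hlarge : ∀ᶠ N in cofinite, s < (F (N - N) - F N) ^ 2 := by
    filter_upwards [(hF.tendsto_apply_cofinite h).eventually_gt_atTop (2 + |s|)] with N hN
    rw [sub_self, hF.apply_zero h]
    nlinarith [le_abs_self s]
  refine (eventually_cofinite.1 hlarge).subset fun N hN => ?_
  exact not_lt.2 (((hF.summable_sq_sub h N).le_tsum N fun n _ => sq_nonneg _).trans hN)

theorem sqrt_le_card_setOf_tsum_sq_sub_le (K : ℕ) :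
    Nat.sqrt (b (K + 1)) ≤
      Nat.card {N : ℤ // ∑' n, (F (n - N) - F n) ^ 2 ≤ 4 * (a K * ((K : ℝ) + 1) ^ 2 + 2)} := by
  have hsub : Set.Icc (1 : ℤ) (Nat.sqrt (b (K + 1))) ⊆
      {N : ℤ | ∑' n, (F (n - N) - F n) ^ 2 ≤ 4 * (a K * ((K : ℝ) + 1) ^ 2 + 2)} := by
    intro N hN
    refine tsum_le_of_sum_le' (by positivity) (hF.sum_sq_sub_le h ?_)
    have : N.natAbs ≤ Nat.sqrt (b (K + 1)) := by grind
    exact (Nat.pow_le_pow_left this 2).trans (Nat.sqrt_le' _)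
  calc Nat.sqrt (b (K + 1)) = Nat.card (Set.Icc (1 : ℤ) (Nat.sqrt (b (K + 1)))) := by simp
    _ ≤ _ := Nat.card_mono (hF.finite_setOf_tsum_sq_sub_le h _) hsub

theorem div_sub_one_le_log_card_div {K : ℕ} (hK : 1 ≤ K) :
    (K : ℝ) / 24 - 1 ≤
      Real.log (Nat.card {N : ℤ // ∑' n, (F (n - N) - F n) ^ 2 ≤
        4 * (a K * ((K : ℝ) + 1) ^ 2 + 2)}) / (4 * (a K * ((K : ℝ) + 1) ^ 2 + 2)) := by
  have hA : (1 : ℝ) ≤ a K := by exact_mod_cast hK.trans (h.self_le_a K)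
  have hKr : (1 : ℝ) ≤ K := by exact_mod_cast hK
  have hsqrt : (0 : ℝ) < Nat.sqrt (b (K + 1)) := by
    exact_mod_cast Nat.sqrt_pos.2 (h.b_succ_pos K)
  have hlog : ((K : ℝ) + 1) ^ 3 * a K / 2 - 1 ≤
      Real.log (Nat.card {N : ℤ // ∑' n, (F (n - N) - F n) ^ 2 ≤
        4 * (a K * ((K : ℝ) + 1) ^ 2 + 2)}) := by
    have := Real.log_le_log hsqrt (Nat.cast_le.2 (hF.sqrt_le_card_setOf_tsum_sq_sub_le h K))
    linarith [log_le_two_mul_log_sqrt_add_two (h.b_succ_pos K), h.mul_a_le_log_b_succ hK]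
  rw [le_div_iff₀ (by positivity)]
  nlinarith [mul_le_mul_of_nonneg_left hA (by positivity : (0 : ℝ) ≤ ((K : ℝ) + 1) ^ 2)]

end IsProfile

end PiecewiseLinearCocycle

open PiecewiseLinearCocycle in
theorem stmt_16_general (b : ℕ → ℕ) (a : ℕ → ℕ) (F : ℤ → ℝ)
    (hb1 : b 1 = 1)
    (hbrec : ∀ n : ℕ, 2 ≤ n → Real.exp ((n : ℝ) ^ 3 * ∑ k ∈ Finset.Icc 1 (n - 1), (b k : ℝ)) ≤ b n)
    (ha : ∀ n, a n = ∑ k ∈ Finset.Icc 1 n, b k)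
    (hF : ∀ (n : ℤ) (k j : ℕ), 1 ≤ k → j ≤ b k → n.natAbs = a (k - 1) + j →
      F n = (k : ℝ) + (j : ℝ) / (b k : ℝ)) :
    (∀ N : ℤ, Summable (fun n : ℤ => (F (n - N) - F n) ^ 2)) ∧
    Filter.limsup (fun s : ℝ =>
        ((Real.log (Nat.card {N : ℤ // ∑' n : ℤ, (F (n - N) - F n) ^ 2 ≤ s}) / s : ℝ) : EReal))
      Filter.atTop = ⊤ := by
  have h : Admissible b a := ⟨hb1, hbrec, ha⟩
  have hF : IsProfile b a F := hF
  refine ⟨hF.summable_sq_sub h, ?_⟩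
  have hs : Tendsto (fun K : ℕ => 4 * (a K * ((K : ℝ) + 1) ^ 2 + 2)) atTop atTop := by
    refine tendsto_atTop_mono (fun K => ?_) tendsto_natCast_atTop_atTop
    have : (K : ℝ) ≤ a K := by exact_mod_cast h.self_le_a K
    have : (1 : ℝ) ≤ (K + 1) ^ 2 := one_le_pow₀ (by linarith)
    nlinarith [mul_le_mul_of_nonneg_left this ((a K).cast_nonneg (α := ℝ))]
  apply limsup_eq_top_of_tendsto hs (tendsto_atTop_mono' _ ?_
    (tendsto_atTop_add_const_right _ (-1) (tendsto_natCast_atTop_atTop.atTop_div_const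
      (by norm_num : (0 : ℝ) < 24))))
  filter_upwards [eventually_ge_atTop 1] with K hK
  simpa [sub_eq_add_neg] using hF.div_sub_one_le_log_card_div h hK

theorem stmt_16 (b : ℕ → ℕ) (a : ℕ → ℕ) (F : ℤ → ℝ)
    (hb1 : b 1 = 1)
    (hbrec : ∀ n : ℕ, 2 ≤ n → Real.exp ((n : ℝ) ^ 3 * ∑ k ∈ Finset.Icc 1 (n - 1), (b k : ℝ)) ≤ b n)
    (ha : ∀ n, a n = ∑ k ∈ Finset.Icc 1 n, b k)
    (hFnonneg : ∀ n, 0 ≤ F n)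
    (hF : ∀ (n : ℤ) (k j : ℕ), 1 ≤ k → j ≤ b k → n.natAbs = a (k - 1) + j →
      F n = (k : ℝ) + (j : ℝ) / (b k : ℝ)) :
    (∀ N : ℤ, Summable (fun n : ℤ => (F (n - N) - F n) ^ 2)) ∧
    Filter.limsup (fun s : ℝ =>
        ((Real.log (Nat.card {N : ℤ // ∑' n : ℤ, (F (n - N) - F n) ^ 2 ≤ s}) / s : ℝ) : EReal))
      Filter.atTop = ⊤ :=
  stmt_16_general b a F hb1 hbrec ha hF
end

section
/- Let (μ_n)_{n≥1} be probability measures on ℝ, p ≠ 0, and suppose there exist t_n ∈ ℝ with ∑_{n=1}^∞ ∫_ℝ d(t - t_n, pℤ)² dμ_n(t) < +∞. Let z_n = ∫_ℝ exp(2πi (t - t_n)/p) dμ_n(t). Then ∑_{n=1}^∞ (1 - |z_n|) < +∞. -/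
/-!
Write `‖y‖` for the distance from `y` to `pℤ`, i.e. the norm of `y` in `AddCircle p`. Since
`1 - ‖z‖ ≤ 1 - Re z`, each term is bounded by `∫ (1 - cos (2π (x - tₙ) / p)) dμₙ`, and
`1 - cos u ≤ u² / 2` applied at the nearest lattice translate gives
`1 - cos (2π y / p) ≤ 2 (π / p)² ‖y‖²`. Summability then follows by comparison.
-/

open MeasureTheory Complex

theorem infDist_range_mul_int (p y : ℝ) :
    Metric.infDist y (Set.range (fun k : ℤ => p * (k : ℝ))) = ‖(y : AddCircle p)‖ := by
  have : Set.range (fun k : ℤ => p * (k : ℝ)) = (AddSubgroup.zmultiples p : Set ℝ) := by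
    ext x; simp [AddSubgroup.mem_zmultiples_iff, mul_comm]
  rw [this, ← QuotientAddGroup.norm_mk]

theorem one_sub_cos_two_pi_div_le (p y : ℝ) :
    1 - Real.cos (2 * Real.pi * y / p) ≤ 2 * (Real.pi / p) ^ 2 * ‖(y : AddCircle p)‖ ^ 2 := by
  rcases eq_or_ne p 0 with rfl | hp
  · simp
  set k := round (p⁻¹ * y)
  have hperiodic : 2 * Real.pi * y / p = 2 * Real.pi * (y - k * p) / p + k * (2 * Real.pi) := by
    field_simp; ring
  rw [AddCircle.norm_eq, sq_abs, hperiodic, Real.cos_add_int_mul_two_pi]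
  have hsq : (2 * Real.pi * (y - k * p) / p) ^ 2 / 2 = 2 * (Real.pi / p) ^ 2 * (y - k * p) ^ 2 := by
    ring
  linarith [Real.one_sub_sq_div_two_le_cos (x := 2 * Real.pi * (y - k * p) / p)]

theorem integrable_exp_ofReal_mul_I {α : Type*} [MeasurableSpace α] {μ : Measure α}
    [IsFiniteMeasure μ] {f : α → ℝ} (hf : AEStronglyMeasurable f μ) :
    Integrable (fun x => exp (f x * I)) μ :=
  .of_bound (by fun_prop) 1 (.of_forall fun x => (norm_exp_ofReal_mul_I (f x)).le)

theorem norm_integral_exp_ofReal_mul_I_le_one {α : Type*} [MeasurableSpace α] {μ : Measure α}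
    [IsProbabilityMeasure μ] (f : α → ℝ) : ‖∫ x, exp (f x * I) ∂μ‖ ≤ 1 := by
  simpa using norm_integral_le_of_norm_le_const (μ := μ)
    (.of_forall fun x => (norm_exp_ofReal_mul_I (f x)).le)

theorem one_sub_norm_integral_exp_ofReal_mul_I_le {α : Type*} [MeasurableSpace α]
    {μ : Measure α} [IsProbabilityMeasure μ] {f : α → ℝ} (hf : AEStronglyMeasurable f μ) :
    1 - ‖∫ x, exp (f x * I) ∂μ‖ ≤ ∫ x, (1 - Real.cos (f x)) ∂μ := by
  have hre : (∫ x, exp (f x * I) ∂μ).re = ∫ x, Real.cos (f x) ∂μ := by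
    rw [← RCLike.re_to_complex, ← integral_re (integrable_exp_ofReal_mul_I hf)]
    simp only [RCLike.re_to_complex, exp_ofReal_mul_I_re]
  have hcos : Integrable (fun x => Real.cos (f x)) μ :=
    .of_bound (by fun_prop) 1 (.of_forall fun x => (Real.abs_cos_le_one _))
  rw [integral_sub (integrable_const 1) hcos, integral_const, ← hre, probReal_univ, one_smul]
  linarith [re_le_norm (∫ x, exp (f x * I) ∂μ)]

theorem one_sub_norm_integral_exp_le_integral_sq_norm_addCircle {α : Type*} [MeasurableSpace α]
    {μ : Measure α} [IsProbabilityMeasure μ] {p : ℝ} (hp : p ≠ 0) {g : α → ℝ}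
    (hg : AEStronglyMeasurable g μ) :
    1 - ‖∫ x, exp ((2 * Real.pi * g x / p : ℝ) * I) ∂μ‖ ≤
      2 * (Real.pi / p) ^ 2 * ∫ x, ‖(g x : AddCircle p)‖ ^ 2 ∂μ := by
  have hnorm : Integrable (fun x => ‖(g x : AddCircle p)‖ ^ 2) μ := by
    refine .of_bound ?_ ((|p| / 2) ^ 2) (.of_forall fun x => ?_)
    · fun_prop
    · rw [Real.norm_eq_abs, abs_pow, abs_norm]
      exact pow_le_pow_left₀ (norm_nonneg _) (AddCircle.norm_le_half_period p hp) 2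
  calc 1 - ‖∫ x, exp ((2 * Real.pi * g x / p : ℝ) * I) ∂μ‖
      ≤ ∫ x, (1 - Real.cos (2 * Real.pi * g x / p)) ∂μ :=
        one_sub_norm_integral_exp_ofReal_mul_I_le (by fun_prop)
    _ ≤ ∫ x, 2 * (Real.pi / p) ^ 2 * ‖(g x : AddCircle p)‖ ^ 2 ∂μ :=
        integral_mono_of_nonneg (.of_forall fun x => sub_nonneg.2 (Real.cos_le_one _))
          (hnorm.const_mul _) (.of_forall fun x => one_sub_cos_two_pi_div_le p (g x))
    _ = 2 * (Real.pi / p) ^ 2 * ∫ x, ‖(g x : AddCircle p)‖ ^ 2 ∂μ := integral_const_mul _ _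

theorem stmt_18 (μ : ℕ → Measure ℝ) [∀ n, IsProbabilityMeasure (μ n)]
    (p : ℝ) (hp : p ≠ 0) (t : ℕ → ℝ)
    (hsum : Summable (fun n : ℕ =>
      ∫ x, (Metric.infDist (x - t n) (Set.range (fun k : ℤ => p * (k : ℝ)))) ^ 2 ∂μ n))
    (z : ℕ → ℂ)
    (hz : ∀ n, z n = ∫ x, Complex.exp (2 * Real.pi * Complex.I * (x - t n) / p) ∂μ n) :
    Summable (fun n : ℕ => 1 - ‖z n‖) := by
  have hz' (n : ℕ) : z n = ∫ x, exp ((2 * Real.pi * (x - t n) / p : ℝ) * I) ∂μ n := by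
    rw [hz]
    congr with x
    congr 1
    push_cast
    ring
  simp only [infDist_range_mul_int] at hsum
  refine .of_nonneg_of_le (fun n => ?_) (fun n => ?_) (hsum.mul_left (2 * (Real.pi / p) ^ 2))
  · rw [sub_nonneg, hz']
    exact norm_integral_exp_ofReal_mul_I_le_one _
  · rw [hz']
    exact one_sub_norm_integral_exp_le_integral_sq_norm_addCircle hp (by fun_prop)
end
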